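/- arXiv:2507.16387 — 6 statements merged into one kernel-verified Lean document; each statement's English description precedes it below -/
import Mathlib

section
/- For p ≥ 2, b ≥ 1 and a ≥ 0, the p-nomial coefficient satisfies [b choose a]_{p-1} = sum over i from 0 to floor(a/p) of (-1)^i * C(b,i) * C(b+a-1-i*p, b-1), where C denotes the binomial coefficient. -/
open PowerSeries Finset


/-- The `p`-nomial coefficient `[b choose a]_{p-1}`: the coefficient of `x^a`
in `(1 + x + x^2 + ⋯ + x^{p-1})^b`. -/
noncomputable def pnomial (p b a : ℕ) : ℕ :=
  ((∑ i ∈ Finset.range p, (Polynomial.X : Polynomial ℕ) ^ i) ^ b).coeff a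

/-- For `p ≥ 2`, `b ≥ 1` and `a ≥ 0`,
`[b choose a]_{p-1} = ∑_{i=0}^{⌊a/p⌋} (-1)^i ⬝ C(b,i) ⬝ C(b+a-1-ip, b-1)`. -/
theorem stmt5 (p b a : ℕ) (hp : 2 ≤ p) (hb : 1 ≤ b) :
    (pnomial p b a : ℤ) = ∑ i ∈ Finset.range (a / p + 1),
      (-1 : ℤ) ^ i * (b.choose i) * ((b + a - 1 - i * p).choose (b - 1)) := by
  classical
  set V : ℤ⟦X⟧ := (invOneSubPow ℤ b).val with hV
  set S : ℤ⟦X⟧ := ∑ i ∈ Finset.range p, (X : ℤ⟦X⟧) ^ i with hS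
  -- step 0: pnomial as coeff of S^b
  have h0 : (pnomial p b a : ℤ) = PowerSeries.coeff a (S ^ b) := by
    have : S = ((∑ i ∈ Finset.range p, (Polynomial.X : Polynomial ℤ) ^ i : Polynomial ℤ) :
        ℤ⟦X⟧) := by
      rw [hS, ← Polynomial.coeToPowerSeries.ringHom_apply, map_sum]
      simp
    rw [this, ← Polynomial.coe_pow, Polynomial.coeff_coe]
    rw [pnomial]
    rw [show (∑ i ∈ Finset.range p, (Polynomial.X : Polynomial ℤ) ^ i)
        = (∑ i ∈ Finset.range p, (Polynomial.X : Polynomial ℕ) ^ i).map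
          (Nat.castRingHom ℤ) by push_cast [Polynomial.map_sum]; simp]
    rw [← Polynomial.map_pow, Polynomial.coeff_map]
    simp
  -- step 1: S * (1 - X) = 1 - X^p
  have h1 : S * (1 - X) = 1 - X ^ p := by
    have := geom_sum_mul (X : ℤ⟦X⟧) p
    rw [hS]
    linear_combination -this
  -- step 2: S^b = (1 - X^p)^b * V
  have h2 : S ^ b = (1 - X ^ p) ^ b * V := by
    have hinv : (1 - X : ℤ⟦X⟧) ^ b * V = 1 := by
      rw [hV, ← invOneSubPow_inv_eq_one_sub_pow]
      exact (invOneSubPow ℤ b).inv_val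
    calc S ^ b = S ^ b * ((1 - X) ^ b * V) := by rw [hinv, mul_one]
      _ = (S * (1 - X)) ^ b * V := by rw [← mul_assoc, ← mul_pow]
      _ = (1 - X ^ p) ^ b * V := by rw [h1]
  -- step 3: expand (1 - X^p)^b
  have h3 : (1 - X ^ p : ℤ⟦X⟧) ^ b
      = ∑ i ∈ Finset.range (b + 1), ((-1) ^ i * (b.choose i : ℤ)) • (X : ℤ⟦X⟧) ^ (i * p) := by
    rw [show (1 - X ^ p : ℤ⟦X⟧) = -X ^ p + 1 by ring, add_pow]
    refine Finset.sum_congr rfl fun i _ => ?_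
    rw [neg_pow, ← pow_mul, one_pow]
    rw [zsmul_eq_mul]
    push_cast
    ring
  -- the coefficient of each term
  set g : ℕ → ℤ := fun i => (-1) ^ i * (b.choose i : ℤ) *
    (PowerSeries.coeff a ((X : ℤ⟦X⟧) ^ (i * p) * V)) with hg
  have h4 : (pnomial p b a : ℤ) = ∑ i ∈ Finset.range (b + 1), g i := by
    rw [h0, h2, h3, Finset.sum_mul, map_sum]
    refine Finset.sum_congr rfl fun i _ => ?_
    rw [smul_mul_assoc, map_zsmul, zsmul_eq_mul]
    push_cast
    ring
  -- values of g
  have hgval : ∀ i, i * p ≤ a →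
      g i = (-1 : ℤ) ^ i * (b.choose i) * ((b + a - 1 - i * p).choose (b - 1)) := by
    intro i hi
    rw [hg]
    simp only
    rw [coeff_X_pow_mul' V (i * p) a, if_pos hi, hV,
      invOneSubPow_val_eq_mk_sub_one_add_choose_of_pos ℤ b hb, coeff_mk]
    have h5 : b - 1 + (a - i * p) = b + a - 1 - i * p := by omega
    rw [h5]
  have hgzero : ∀ i, a < i * p → g i = 0 := by
    intro i hi
    rw [hg]
    simp only
    rw [coeff_X_pow_mul' V (i * p) a, if_neg (by omega)]
    ring
  -- compare the two sums
  have hp0 : 0 < p := by omega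
  have e1 : ∑ i ∈ Finset.range (b + 1), g i
      = ∑ i ∈ Finset.range (max (b + 1) (a / p + 1)), g i := by
    refine Finset.sum_subset (Finset.range_subset_range.2 (le_max_left _ _)) ?_
    intro i _ hi
    simp only [Finset.mem_range, not_lt] at hi
    rw [hg]
    simp [Nat.choose_eq_zero_of_lt (by omega : b < i)]
  have e2 : ∑ i ∈ Finset.range (max (b + 1) (a / p + 1)), g i
      = ∑ i ∈ Finset.range (a / p + 1), g i := by
    refine (Finset.sum_subset (Finset.range_subset_range.2 (le_max_right _ _)) ?_).symm
    intro i _ hi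
    simp only [Finset.mem_range, not_lt] at hi
    refine hgzero i ?_
    have h6 : a / p < i := by omega
    calc a < (a / p + 1) * p := by
            have h7 := Nat.div_add_mod a p
            have h8 := Nat.mod_lt a hp0
            have h9 : (a / p + 1) * p = p * (a / p) + p := by ring
            omega
      _ ≤ i * p := Nat.mul_le_mul_right p (by omega)
  rw [h4, e1, e2]
  refine Finset.sum_congr rfl fun i hi => ?_
  simp only [Finset.mem_range] at hi
  refine hgval i ?_
  calc i * p ≤ (a / p) * p := Nat.mul_le_mul_right p (by omega)
    _ ≤ a := Nat.div_mul_le_self a p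
end

section
/- For p ≥ 2 and n ≥ 0, the number of binary strings of length n containing no p consecutive 1s equals F^{(p)}_{n+p}. -/
open List Finset

/-- A binary string (list over `Bool`) contains no `p` consecutive `1`s. -/
def noRun (p : ℕ) (l : List Bool) : Prop := ¬ (List.replicate p true) <:+: l

namespace Stmt6Aux

def allLists (n : ℕ) : Finset (List Bool) :=
  (Finset.univ : Finset (Fin n → Bool)).image List.ofFn

lemma mem_allLists {n : ℕ} {l : List Bool} : l ∈ allLists n ↔ l.length = n := by
  simp only [allLists, Finset.mem_image, Finset.mem_univ, true_and]
  constructor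
  · rintro ⟨f, rfl⟩; simp
  · intro h
    refine ⟨fun i => l.get (Fin.cast h.symm i), ?_⟩
    apply List.ext_getElem
    · simp [h]
    · intro i h1 h2; simp

lemma card_allLists (n : ℕ) : (allLists n).card = 2 ^ n := by
  rw [allLists, Finset.card_image_of_injective _ List.ofFn_injective]
  simp

def good (p n : ℕ) : Finset (List Bool) :=
  (allLists n).filter (fun l => ¬ (List.replicate p true <:+: l))

lemma mem_good {p n : ℕ} {l : List Bool} :
    l ∈ good p n ↔ l.length = n ∧ noRun p l := by
  simp [good, mem_allLists, noRun]

lemma noRun_cons_decomp {p k : ℕ} {t : List Bool} (hk : k < p) (ht : noRun p t) :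
    noRun p (replicate k true ++ false :: t) := by
  rintro ⟨a, c, hac⟩
  rw [List.append_assoc] at hac
  by_cases h : a.length ≤ k
  · have hlt : k < (a ++ (replicate p true ++ c)).length := by
      simp; omega
    have h1 : (a ++ (replicate p true ++ c))[k] = true := by
      rw [List.getElem_append_right h,
        List.getElem_append_left (by simp; omega), List.getElem_replicate]
    have h2 := List.getElem_of_eq hac hlt
    rw [h1, List.getElem_append_right (by simp)] at h2
    simp at h2
  · push_neg at h
    apply ht
    refine ⟨a.drop (k + 1), c, ?_⟩
    have := congrArg (List.drop (k + 1)) hac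
    rw [List.drop_append_of_le_length (by omega)] at this
    have h2 : List.drop (k + 1) (replicate k true ++ false :: t) = t := by
      have : replicate k true ++ false :: t = (replicate k true ++ [false]) ++ t := by simp
      rw [this, List.drop_append]
      simp
    rw [h2] at this
    rw [← List.append_assoc] at this
    exact this

lemma decomp {p n : ℕ} (hp : 1 ≤ p) (hn : p ≤ n) {l : List Bool}
    (hlen : l.length = n) (hl : noRun p l) :
    ∃ k < p, ∃ t, t.length = n - 1 - k ∧ noRun p t ∧
      l = replicate k true ++ false :: t := by
  set a := l.takeWhile (fun b => b) with ha
  set d := l.dropWhile (fun b => b) with hd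
  have hsplit : a ++ d = l := List.takeWhile_append_dropWhile
  have harep : a = replicate a.length true :=
    List.eq_replicate_of_mem (fun b hb => by simpa using List.mem_takeWhile_imp hb)
  have hdne : d ≠ [] := by
    intro h
    rw [h, List.append_nil] at hsplit
    apply hl
    refine ⟨[], replicate (n - p) true, ?_⟩
    rw [← hsplit, harep, List.nil_append, ← List.replicate_add]
    congr 1
    rw [← hsplit, harep] at hlen
    simp at hlen
    omega
  obtain ⟨b, t, hbt⟩ := List.exists_cons_of_ne_nil hdne
  have hbt' : l.dropWhile (fun b => b) = b :: t := by rw [← hd]; exact hbt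
  have hb : b = false := by
    have := List.head_dropWhile_not (fun b => b) (l := l)
      (by rw [hbt']; simp)
    simp only [hbt'] at this
    simpa using this
  have hk : a.length < p := by
    by_contra hk
    push_neg at hk
    apply hl
    refine ⟨[], replicate (a.length - p) true ++ d, ?_⟩
    rw [List.nil_append, ← List.append_assoc, ← List.replicate_add, ← hsplit, harep]
    congr 2
    simp only [List.length_replicate]
    omega
  refine ⟨a.length, hk, t, ?_, ?_, ?_⟩
  · have : l.length = a.length + (b :: t).length := by rw [← hsplit, hbt]; simp
    simp at this
    omega
  · intro hr
    exact hl (hr.trans ⟨a ++ [b], [], by simp [← hsplit, hbt]⟩)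
  · rw [← hsplit, hbt, hb, ← harep]

lemma repl_inj {t t' : List Bool} : ∀ {k k' : ℕ},
    replicate k true ++ false :: t = replicate k' true ++ false :: t' →
    k = k' ∧ t = t' := by
  intro k
  induction k with
  | zero =>
    intro k' h
    cases k' with
    | zero => simpa using h
    | succ m => simp [List.replicate_succ] at h
  | succ m ih =>
    intro k' h
    cases k' with
    | zero => simp [List.replicate_succ] at h
    | succ m' =>
      simp only [List.replicate_succ, List.cons_append, List.cons.injEq] at h
      obtain ⟨h1, h2⟩ := ih h.2
      exact ⟨by omega, h2⟩

lemma good_eq_biUnion {p n : ℕ} (hp : 1 ≤ p) (hn : p ≤ n) :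
    good p n = (Finset.range p).biUnion
      (fun k => (good p (n - 1 - k)).image (fun t => replicate k true ++ false :: t)) := by
  ext l
  simp only [mem_good, Finset.mem_biUnion, Finset.mem_range, Finset.mem_image]
  constructor
  · rintro ⟨hlen, hl⟩
    obtain ⟨k, hk, t, ht1, ht2, ht3⟩ := decomp hp hn hlen hl
    exact ⟨k, hk, t, ⟨ht1, ht2⟩, ht3.symm⟩
  · rintro ⟨k, hk, t, ht, rfl⟩
    obtain ⟨ht1, ht2⟩ := ht
    constructor
    · simp [ht1]; omega
    · exact noRun_cons_decomp hk ht2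

lemma geom : ∀ n : ℕ, ∑ i ∈ Finset.Icc 1 n, 2 ^ (n - i) = 2 ^ n - 1 := by
  intro n
  induction n with
  | zero => simp
  | succ m ih =>
    rw [Finset.sum_Icc_succ_top (by omega)]
    have : ∀ i ∈ Finset.Icc 1 m, 2 ^ (m + 1 - i) = 2 * 2 ^ (m - i) := by
      intro i hi
      simp only [Finset.mem_Icc] at hi
      rw [show m + 1 - i = (m - i) + 1 by omega, pow_succ]
      ring
    rw [Finset.sum_congr rfl this, ← Finset.mul_sum, ih]
    have h1 : 1 ≤ 2 ^ m := Nat.one_le_two_pow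
    simp
    rw [pow_succ]
    omega

end Stmt6Aux

open Stmt6Aux

/-- For `p ≥ 2` and `n ≥ 0`, the number of binary strings of length `n` containing no
`p` consecutive `1`s equals `F^{(p)}_{n+p}`. -/
theorem stmt6 (p n : ℕ) (hp : 2 ≤ p)
    (F : ℕ → ℕ)
    (hF0 : ∀ m, m + 2 ≤ p → F m = 0)
    (hF1 : F (p - 1) = 1)
    (hFrec : ∀ m, p ≤ m → F m = ∑ i ∈ Finset.Icc 1 p, F (m - i)) :
    {l : List Bool | l.length = n ∧ noRun p l}.ncard = F (n + p) := by
  have hFval : ∀ n, n < p → F (n + p) = 2 ^ n := by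
    intro n
    induction n using Nat.strong_induction_on with
    | _ n ih =>
      intro hn
      rw [hFrec (n + p) (by omega)]
      have hsub : Finset.Icc 1 (n + 1) ⊆ Finset.Icc 1 p := by
        intro x hx; simp at hx ⊢; omega
      rw [← Finset.sum_subset hsub (by
        intro x hx hx2
        simp at hx hx2
        apply hF0
        omega)]
      rw [Finset.sum_Icc_succ_top (by omega)]
      rw [show n + p - (n + 1) = p - 1 by omega, hF1]
      have : ∀ i ∈ Finset.Icc 1 n, F (n + p - i) = 2 ^ (n - i) := by
        intro i hi
        simp at hi
        rw [show n + p - i = (n - i) + p by omega]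
        exact ih (n - i) (by omega) (by omega)
      rw [Finset.sum_congr rfl this, geom]
      have h1 : 1 ≤ 2 ^ n := Nat.one_le_two_pow
      omega
  have key : ∀ n, (good p n).card = F (n + p) := by
    intro n
    induction n using Nat.strong_induction_on with
    | _ n ih =>
      by_cases hn : n < p
      · rw [hFval n hn]
        have : good p n = allLists n := by
          rw [good, Finset.filter_eq_self]
          intro l hl
          intro hinf
          have := hinf.length_le
          rw [mem_allLists.mp hl] at this
          simp at this
          omega
        rw [this, card_allLists]
      · push_neg at hn
        rw [good_eq_biUnion (by omega) hn]
        rw [Finset.card_biUnion (by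
          intro k hk k' hk' hkk'
          simp only [Finset.disjoint_left, Finset.mem_image]
          rintro x ⟨t, ht, rfl⟩ ⟨t', ht', heq⟩
          exact hkk' (repl_inj heq).1.symm)]
        have himg : ∀ k ∈ Finset.range p,
            ((good p (n - 1 - k)).image (fun t => replicate k true ++ false :: t)).card
              = F (n - 1 - k + p) := by
          intro k hk
          rw [Finset.card_image_of_injective _ (fun t t' h => (repl_inj h).2)]
          exact ih _ (by simp at hk; omega)
        rw [Finset.sum_congr rfl himg]
        rw [hFrec (n + p) (by omega)]
        rw [← Finset.Ico_add_one_right_eq_Icc, Finset.sum_Ico_eq_sum_range]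
        apply Finset.sum_congr (by congr 1)
        intro k hk
        simp at hk
        congr 1
        omega
  have hset : {l : List Bool | l.length = n ∧ noRun p l} = ↑(good p n) := by
    ext l
    simp [mem_good]
  rw [hset, Set.ncard_coe_finset, key]
end

section
/- For p ≥ 2, n ≥ 0 and w ≥ 0, the number of binary strings of length n with Hamming weight w containing no p consecutive 1s equals the p-nomial coefficient [n-w+1 choose w]_{p-1}. -/
/-- The `p`-nomial coefficient with integer indices, `0` outside the valid range. -/
noncomputable def pnomZ (p : ℕ) (b a : ℤ) : ℕ :=
  if 0 ≤ b then (if 0 ≤ a then pnomial p b.toNat a.toNat else 0) else 0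

section aux

open List Finset Polynomial

lemma pnomial_zero (p a : ℕ) : pnomial p 0 a = if a = 0 then 1 else 0 := by
  simp [pnomial, Polynomial.coeff_one, eq_comm]

lemma pnomial_one (p a : ℕ) : pnomial p 1 a = if a < p then 1 else 0 := by
  simp only [pnomial, pow_one, Polynomial.finset_sum_coeff, Polynomial.coeff_X_pow]
  rw [Finset.sum_ite_eq (Finset.range p) a (fun _ => (1:ℕ))]
  simp [Finset.mem_range]

lemma pnomial_succ (p b a : ℕ) : pnomial p (b+1) a
    = ∑ i ∈ Finset.range p, if i ≤ a then pnomial p b (a-i) else 0 := by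
  simp only [pnomial, pow_succ, Finset.mul_sum, Polynomial.finset_sum_coeff,
    Polynomial.coeff_mul_X_pow']

instance noRun.dec (p : ℕ) (l : List Bool) : Decidable (noRun p l) := by
  unfold noRun; exact instDecidableNot

/-- all lists of a given length -/
def allLists : ℕ → Finset (List Bool)
  | 0 => {[]}
  | n+1 => ((allLists n).image (List.cons true)) ∪ ((allLists n).image (List.cons false))

lemma mem_allLists (n : ℕ) (l : List Bool) : l ∈ allLists n ↔ l.length = n := by
  induction n generalizing l with
  | zero => simp [allLists, List.length_eq_zero_iff]
  | succ n ih =>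
    cases l with
    | nil => simp [allLists]
    | cons a t =>
      cases a <;> simp [allLists, ih]

def Sfin (p n w : ℕ) : Finset (List Bool) :=
  (allLists n).filter (fun l => noRun p l ∧ l.count true = w)

lemma mem_Sfin {p n w : ℕ} {l : List Bool} :
    l ∈ Sfin p n w ↔ l.length = n ∧ noRun p l ∧ l.count true = w := by
  simp [Sfin, Finset.mem_filter, mem_allLists, and_assoc]

lemma prefix_trues {k : ℕ} {a b : List Bool} (h : List.replicate k true <+: a ++ false :: b) :
    List.replicate k true <+: a := by
  induction a generalizing k with
  | nil =>
    cases k with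
    | zero => simp
    | succ k =>
      rw [List.replicate_succ] at h
      rcases h with ⟨r, hr⟩
      simp at hr
  | cons x a' ih =>
    cases k with
    | zero => simp
    | succ k =>
      rw [List.replicate_succ] at h
      rw [List.cons_append] at h
      rcases (List.cons_prefix_cons.mp h) with ⟨rfl, h2⟩
      rw [List.replicate_succ]
      exact List.cons_prefix_cons.mpr ⟨rfl, ih h2⟩

lemma infix_split {k : ℕ} (hk : 1 ≤ k) (a b : List Bool) :
    List.replicate k true <:+: a ++ false :: b ↔
      (List.replicate k true <:+: a ∨ List.replicate k true <:+: b) := by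
  constructor
  · intro h
    induction a with
    | nil =>
      rw [List.nil_append, List.infix_cons_iff] at h
      rcases h with h | h
      · exfalso
        have := prefix_trues (a := []) (by simpa using h)
        have := this.length_le
        simp at this
        omega
      · exact Or.inr h
    | cons x a' ih =>
      rw [List.cons_append, List.infix_cons_iff] at h
      rcases h with h | h
      · left
        have h' := prefix_trues (a := x :: a') (by simpa using h)
        exact h'.isInfix
      · rcases ih h with h | h
        · exact Or.inl (List.infix_cons h)
        · exact Or.inr h
  · intro h
    rcases h with h | h
    · exact h.trans ((List.prefix_append a (false :: b)).isInfix)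
    · exact h.trans (((List.suffix_cons false b).trans (List.suffix_append a (false :: b))).isInfix)

lemma tw_eq (j : ℕ) (t : List Bool) :
    (List.replicate j true ++ false :: t).takeWhile (fun b => b) = List.replicate j true := by
  induction j with
  | zero => simp
  | succ j ih => simp [List.replicate_succ, ih]

lemma dw_eq (j : ℕ) (t : List Bool) :
    (List.replicate j true ++ false :: t).dropWhile (fun b => b) = false :: t := by
  induction j with
  | zero => simp
  | succ j ih => simp [List.replicate_succ, ih]

lemma pair_eq {j j' : ℕ} {t t' : List Bool}
    (h : List.replicate j true ++ false :: t = List.replicate j' true ++ false :: t') :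
    j = j' ∧ t = t' := by
  have h1 := tw_eq j t
  have h2 := dw_eq j t
  rw [h] at h1 h2
  rw [tw_eq] at h1
  rw [dw_eq] at h2
  constructor
  · have := congrArg List.length h1
    simpa using this.symm
  · simpa using h2.symm

lemma Sfin_recur {p n w : ℕ} (hp : 1 ≤ p) (hw : w < n) :
    Sfin p n w = ((Finset.range p).filter (· ≤ w)).biUnion
      (fun j => (Sfin p (n-1-j) (w-j)).image
        (fun t => List.replicate j true ++ false :: t)) := by
  ext l
  simp only [Finset.mem_biUnion, Finset.mem_filter, Finset.mem_range, Finset.mem_image, mem_Sfin]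
  constructor
  · rintro ⟨hlen, hnr, hcnt⟩
    set j := (l.takeWhile (fun b => b)).length with hj
    have hdw : l.dropWhile (fun b => b) ≠ [] := by
      intro hnil
      have hall := List.dropWhile_eq_nil_iff.mp hnil
      have : l.count true = l.length := by
        rw [List.count_eq_length]
        intro b hb
        exact ((hall b hb)).symm
      omega
    have htw : l.takeWhile (fun b => b) = List.replicate j true := by
      apply List.eq_replicate_of_mem
      intro b hb
      exact List.mem_takeWhile_imp hb
    obtain ⟨hd, tl, hdw2⟩ := List.exists_cons_of_ne_nil hdw
    have hhd : hd = false := by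
      have h2 := List.head?_dropWhile_not (fun b => b) l
      rw [hdw2] at h2
      simpa using h2
    subst hhd
    have hdec : l = List.replicate j true ++ false :: tl := by
      conv_lhs => rw [← List.takeWhile_append_dropWhile (p := fun b => b) (l := l)]
      rw [htw, hdw2]
    have hcnt' : j + tl.count true = w := by
      rw [hdec] at hcnt
      simpa [List.count_append, List.count_replicate] using hcnt
    have hjw : j ≤ w := by omega
    have hjp : j < p := by
      by_contra hjp
      push_neg at hjp
      apply hnr
      have : List.replicate p true <+: l := by
        rw [hdec]
        refine List.IsPrefix.trans ?_ (List.prefix_append _ _)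
        have : List.replicate j true = List.replicate p true ++ List.replicate (j - p) true := by
          rw [← List.replicate_add]; congr 1; omega
        rw [this]
        exact List.prefix_append _ _
      exact this.isInfix
    have hlen' : tl.length = n - 1 - j := by
      have := congrArg List.length hdec
      simp at this
      omega
    refine ⟨j, ⟨hjp, hjw⟩, tl, ⟨hlen', ?_, by omega⟩, hdec.symm⟩
    · intro hin
      apply hnr
      rw [hdec]
      exact (infix_split hp _ _).mpr (Or.inr hin)
  · rintro ⟨j, ⟨hjp, hjw⟩, t, ⟨hlen, hnr, hcnt⟩, rfl⟩
    refine ⟨?_, ?_, ?_⟩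
    · simp [List.length_append, List.length_replicate]
      omega
    · intro hin
      rcases (infix_split hp _ _).mp hin with h | h
      · have := h.length_le
        simp at this
        omega
      · exact hnr h
    · simp [List.count_append, List.count_replicate]
      omega

lemma Sfin_card_eq_zero {p n w : ℕ} (hw : n < w) : Sfin p n w = ∅ := by
  ext l
  simp only [mem_Sfin, Finset.notMem_empty, iff_false]
  rintro ⟨hlen, _, hcnt⟩
  have := l.count_le_length (a := true)
  omega

lemma Sfin_diag {p n : ℕ} : Sfin p n n = if n < p then {List.replicate n true} else ∅ := by
  ext l
  simp only [mem_Sfin]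
  have hrep : ∀ (hlen : l.length = n) (hcnt : l.count true = n), l = List.replicate n true := by
    intro hlen hcnt
    rw [← hlen]
    apply List.eq_replicate_of_mem
    intro b hb
    have : l.count true = l.length := by omega
    rw [List.count_eq_length] at this
    exact (this b hb).symm
  split
  · next h =>
    simp only [Finset.mem_singleton]
    constructor
    · rintro ⟨hlen, _, hcnt⟩
      exact hrep hlen hcnt
    · rintro rfl
      refine ⟨by simp, ?_, by simp⟩
      intro hin
      have := hin.length_le
      simp at this
      omega
  · next h =>
    simp only [Finset.notMem_empty, iff_false]
    rintro ⟨hlen, hnr, hcnt⟩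
    push_neg at h
    apply hnr
    have heq := hrep hlen hcnt
    rw [heq]
    have : List.replicate n true = List.replicate p true ++ List.replicate (n - p) true := by
      rw [← List.replicate_add]; congr 1; omega
    rw [this]
    exact (List.prefix_append _ _).isInfix

lemma main_card (p : ℕ) (hp : 1 ≤ p) : ∀ n w : ℕ, w ≤ n →
    (Sfin p n w).card = pnomial p (n - w + 1) w := by
  intro n
  induction n using Nat.strong_induction_on with
  | _ n ih =>
    intro w hw
    rcases eq_or_lt_of_le hw with rfl | hlt
    · rw [Sfin_diag, Nat.sub_self, pnomial_one]
      split <;> simp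
    · -- w < n
      have hnw1 : n - w + 1 = (n - w - 1 + 1) + 1 := by omega
      have hdisj : ∀ j ∈ (Finset.range p).filter (· ≤ w), ∀ j' ∈ (Finset.range p).filter (· ≤ w),
          j ≠ j' → Disjoint
            ((Sfin p (n-1-j) (w-j)).image (fun t => List.replicate j true ++ false :: t))
            ((Sfin p (n-1-j') (w-j')).image (fun t => List.replicate j' true ++ false :: t)) := by
        intro j _ j' _ hne
        rw [Finset.disjoint_left]
        rintro x hx hx'
        simp only [Finset.mem_image] at hx hx'
        obtain ⟨t, _, rfl⟩ := hx
        obtain ⟨t', _, h⟩ := hx'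
        exact hne (pair_eq h.symm).1
      rw [hnw1, pnomial_succ, Sfin_recur hp hlt, Finset.card_biUnion hdisj,
        ← Finset.sum_filter]
      apply Finset.sum_congr rfl
      intro j hj
      simp only [Finset.mem_filter, Finset.mem_range] at hj
      rw [Finset.card_image_of_injective _ (fun t t' h => (pair_eq h).2)]
      have h1 : n - 1 - j < n := by omega
      have h2 : w - j ≤ n - 1 - j := by omega
      rw [ih _ h1 _ h2]
      congr 1
      omega

end aux

/-- For `p ≥ 2`, `n ≥ 0` and `w ≥ 0`, the number of binary strings of length `n` with
Hamming weight `w` and no `p` consecutive `1`s equals the `p`-nomial coefficient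
`[n-w+1 choose w]_{p-1}`. -/
theorem stmt7 (p n w : ℕ) (hp : 2 ≤ p) :
    {l : List Bool | l.length = n ∧ noRun p l ∧ l.count true = w}.ncard
      = pnomZ p ((n : ℤ) - (w : ℤ) + 1) (w : ℤ) := by
  have hset : {l : List Bool | l.length = n ∧ noRun p l ∧ l.count true = w}
      = ↑(Sfin p n w) := by
    ext l; simp [mem_Sfin]
  rw [hset, Set.ncard_coe_finset]
  have hp1 : 1 ≤ p := by omega
  rcases le_or_gt w n with h | h
  · rw [main_card p hp1 n w h]
    unfold pnomZ
    rw [if_pos (by omega), if_pos (by omega)]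
    congr 1
    all_goals omega
  · rw [Sfin_card_eq_zero h, Finset.card_empty]
    unfold pnomZ
    by_cases hb : (0:ℤ) ≤ (n : ℤ) - (w : ℤ) + 1
    · rw [if_pos hb, if_pos (by omega)]
      have h0 : ((n : ℤ) - (w : ℤ) + 1).toNat = 0 := by omega
      rw [h0, pnomial_zero, if_neg (by omega)]
    · rw [if_neg hb]
end

section
/- For p ≥ 2 and n ≥ p, the number of edges of the p-th order Fibonacci cube Γ^{(p)}_n satisfies |E(Γ^{(p)}_n)| = sum_{i=1}^{p} |E(Γ^{(p)}_{n-i})| + sum_{i=2}^{p} (i-1)·|V(Γ^{(p)}_{n-i})|. -/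
/-- A vertex of the `p`-th order Fibonacci cube `Γ^{(p)}_n`: a binary string of length
`n` (as a function `Fin n → Bool`) with no `p` consecutive `1`s. -/
def gVert (p n : ℕ) (u : Fin n → Bool) : Prop :=
  ¬ (List.replicate p true) <:+: List.ofFn u

open Classical in
/-- The Hamming distance between two binary strings of length `n`. -/
noncomputable def hDist {n : ℕ} (u v : Fin n → Bool) : ℕ :=
  (Finset.univ.filter fun i => u i ≠ v i).card

/-- The number of vertices of `Γ^{(p)}_n`. -/
noncomputable def vCount (p n : ℕ) : ℕ := {u : Fin n → Bool | gVert p n u}.ncard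

/-- The number of edges of `Γ^{(p)}_n`: unordered pairs of vertices at Hamming
distance `1`. -/
noncomputable def eCount (p n : ℕ) : ℕ :=
  {e : Sym2 (Fin n → Bool) | ∃ u v, e = s(u, v) ∧ gVert p n u ∧ gVert p n v ∧
    hDist u v = 1}.ncard


namespace FibAux

/-- first index of `false` (or length if all true) -/
def f0 : List Bool → ℕ
  | [] => 0
  | false :: _ => 0
  | true :: l => f0 l + 1

@[simp] lemma f0_nil : f0 [] = 0 := rfl
@[simp] lemma f0_false (l : List Bool) : f0 (false :: l) = 0 := rfl
@[simp] lemma f0_true (l : List Bool) : f0 (true :: l) = f0 l + 1 := rfl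

@[simp] lemma f0_replicate_append (m : ℕ) (w : List Bool) :
    f0 (List.replicate m true ++ false :: w) = m := by
  induction m with
  | zero => simp
  | succ m ih => simp [List.replicate_succ, ih]

lemma f0_decomp : ∀ (l : List Bool), f0 l < l.length →
    ∃ w, l = List.replicate (f0 l) true ++ false :: w
  | [], h => by simp at h
  | false :: t, _ => ⟨t, by simp⟩
  | true :: t, h => by
    simp at h ⊢
    obtain ⟨w, hw⟩ := f0_decomp t h
    exact ⟨w, by rw [List.replicate_succ]; simpa using hw⟩

lemma replicate_prefix_of_le_f0 : ∀ (k : ℕ) (l : List Bool), k ≤ f0 l →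
    List.replicate k true <+: l
  | 0, l, _ => by simp
  | (k+1), [], h => by simp at h
  | (k+1), false :: t, h => by simp at h
  | (k+1), true :: t, h => by
    simp at h
    rw [List.replicate_succ, List.cons_prefix_cons]
    exact ⟨rfl, replicate_prefix_of_le_f0 k t h⟩

/-- "ok" strings: no `p` consecutive trues -/
def ok (p : ℕ) (l : List Bool) : Prop := ¬ (List.replicate p true <:+: l)

instance (p : ℕ) : DecidablePred (ok p) := fun _ => by unfold ok; infer_instance

lemma f0_lt_of_ok {p : ℕ} {l : List Bool} (hl : ok p l) (h : p ≤ l.length) : f0 l < p := by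
  by_contra hc
  push_neg at hc
  exact hl ((replicate_prefix_of_le_f0 p l hc).isInfix)

lemma replicate_prefix_append_iff (w : List Bool) : ∀ (k m : ℕ),
    (List.replicate k true <+: List.replicate m true ++ false :: w) ↔ k ≤ m
  | 0, m => by simp
  | (k+1), 0 => by
    simp [List.replicate_succ, List.cons_prefix_cons]
  | (k+1), (m+1) => by
    rw [List.replicate_succ, List.replicate_succ, List.cons_append, List.cons_prefix_cons]
    simp [replicate_prefix_append_iff w k m]

lemma ok_replicate_append {p : ℕ} (hp : 0 < p) {m : ℕ} (hm : m < p) (w : List Bool) :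
    ok p (List.replicate m true ++ false :: w) ↔ ok p w := by
  induction m with
  | zero =>
    simp only [List.replicate_zero, List.nil_append]
    unfold ok
    rw [List.infix_cons_iff]
    have : ¬ (List.replicate p true <+: false :: w) := by
      obtain ⟨q, rfl⟩ : ∃ q, p = q + 1 := ⟨p - 1, by omega⟩
      rw [List.replicate_succ, List.cons_prefix_cons]
      simp
    tauto
  | succ m ih =>
    rw [List.replicate_succ, List.cons_append]
    unfold ok
    rw [List.infix_cons_iff]
    have h1 : ¬ (List.replicate p true <+: true :: (List.replicate m true ++ false :: w)) := by
      obtain ⟨q, rfl⟩ : ∃ q, p = q + 1 := ⟨p - 1, by omega⟩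
      rw [List.replicate_succ, List.cons_prefix_cons, replicate_prefix_append_iff]
      omega
    have h2 := ih (by omega)
    unfold ok at h2
    tauto

/-- number of differing positions -/
def ndiff : List Bool → List Bool → ℕ
  | x :: a, y :: b => (if x = y then 0 else 1) + ndiff a b
  | _, _ => 0

@[simp] lemma ndiff_cons (x y : Bool) (a b : List Bool) :
    ndiff (x :: a) (y :: b) = (if x = y then 0 else 1) + ndiff a b := rfl

@[simp] lemma ndiff_self : ∀ (l : List Bool), ndiff l l = 0
  | [] => rfl
  | _ :: t => by simp [ndiff_self t]

lemma ndiff_comm : ∀ (a b : List Bool), ndiff a b = ndiff b a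
  | [], [] => rfl
  | [], _ :: _ => rfl
  | _ :: _, [] => rfl
  | x :: a, y :: b => by
    simp [ndiff_comm a b, eq_comm (a := x) (b := y)]

@[simp] lemma ndiff_append_left : ∀ (c x y : List Bool),
    ndiff (c ++ x) (c ++ y) = ndiff x y
  | [], _, _ => rfl
  | _ :: t, x, y => by simp [ndiff_append_left t x y]

lemma eq_of_ndiff_eq_zero : ∀ (a b : List Bool), a.length = b.length →
    ndiff a b = 0 → a = b
  | [], [], _, _ => rfl
  | x :: a, y :: b, hl, hd => by
    simp at hl hd ⊢
    rcases hd with ⟨h1, h2⟩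
    exact ⟨by by_contra hc; simp [hc] at h1, eq_of_ndiff_eq_zero a b hl h2⟩

/-- all binary strings of length n -/
def allB : ℕ → Finset (List Bool)
  | 0 => {[]}
  | n+1 => ((allB n).map ⟨List.cons true, fun a b h => by injection h⟩) ∪
           ((allB n).map ⟨List.cons false, fun a b h => by injection h⟩)

lemma mem_allB : ∀ {n : ℕ} {l : List Bool}, l ∈ allB n ↔ l.length = n
  | 0, l => by
    constructor
    · intro h; simp [allB] at h; simp [h]
    · intro h; simp [allB]; exact List.eq_nil_of_length_eq_zero h
  | (n+1), l => by
    simp only [allB, Finset.mem_union, Finset.mem_map, Function.Embedding.coeFn_mk]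
    constructor
    · rintro (⟨a, ha, rfl⟩ | ⟨a, ha, rfl⟩) <;> exact congrArg Nat.succ (mem_allB.1 ha)
    · intro h
      match l with
      | true :: t => exact Or.inl ⟨t, mem_allB.2 (by simpa using h), rfl⟩
      | false :: t => exact Or.inr ⟨t, mem_allB.2 (by simpa using h), rfl⟩

/-- vertices Finset -/
def VF (p n : ℕ) : Finset (List Bool) := (allB n).filter (ok p)

/-- oriented-edge (as pairs) Finset -/
def EF (p n : ℕ) : Finset (List Bool × List Bool) :=
  ((allB n) ×ˢ (allB n)).filter fun q => ok p q.1 ∧ ok p q.2 ∧ ndiff q.1 q.2 = 1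

lemma mem_EF {p n : ℕ} {q : List Bool × List Bool} :
    q ∈ EF p n ↔ q.1.length = n ∧ q.2.length = n ∧ ok p q.1 ∧ ok p q.2 ∧ ndiff q.1 q.2 = 1 := by
  simp [EF, Finset.mem_filter, Finset.mem_product, mem_allB]; tauto

lemma mem_VF {p n : ℕ} {l : List Bool} :
    l ∈ VF p n ↔ l.length = n ∧ ok p l := by
  simp [VF, Finset.mem_filter, mem_allB]

end FibAux

namespace FibAux

lemma split_rep {ka kb : ℕ} (h : ka < kb) (w : List Bool) :
    List.replicate kb true ++ false :: w =
      List.replicate ka true ++ true :: (List.replicate (kb - ka - 1) true ++ false :: w) := by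
  rw [show kb = ka + ((kb - ka - 1) + 1) by omega, List.replicate_add, List.replicate_succ,
    List.append_assoc]
  simp

lemma diag_fiber {p n : ℕ} (hp : 0 < p) {m : ℕ} (hm : m < p) (hn : p ≤ n) :
    ((EF p n).filter fun q => (f0 q.1, f0 q.2) = (m, m)).card = (EF p (n - m - 1)).card := by
  have hcard : ((EF p n).filter fun q => (f0 q.1, f0 q.2) = (m, m)) =
      (EF p (n - m - 1)).map
        ⟨fun q => (List.replicate m true ++ false :: q.1, List.replicate m true ++ false :: q.2),
          by
            rintro ⟨a, b⟩ ⟨c, d⟩ h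
            simp only [Prod.mk.injEq] at h
            obtain ⟨h1, h2⟩ := h
            have h1 := List.append_cancel_left h1
            have h2 := List.append_cancel_left h2
            simp_all⟩ := by
    ext ⟨a, b⟩
    simp only [Finset.mem_filter, Finset.mem_map, mem_EF, Prod.mk.injEq,
      Function.Embedding.coeFn_mk]
    constructor
    · rintro ⟨⟨ha, hb, oka, okb, hd⟩, hfa, hfb⟩
      obtain ⟨w, hw⟩ := f0_decomp a (by omega)
      obtain ⟨w', hw'⟩ := f0_decomp b (by omega)
      rw [hfa] at hw; rw [hfb] at hw'
      have hlw : w.length = n - m - 1 := by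
        have := congrArg List.length hw; simp at this; omega
      have hlw' : w'.length = n - m - 1 := by
        have := congrArg List.length hw'; simp at this; omega
      refine ⟨(w, w'), ⟨hlw, hlw', ?_, ?_, ?_⟩, by subst hw hw'; rfl⟩
      · exact (ok_replicate_append hp hm w).1 (hw ▸ oka)
      · exact (ok_replicate_append hp hm w').1 (hw' ▸ okb)
      · rw [hw, hw'] at hd
        simpa using hd
    · rintro ⟨⟨w, w'⟩, ⟨hlw, hlw', okw, okw', hd⟩, rfl, rfl⟩
      dsimp only at hlw hlw' okw okw' hd
      refine ⟨⟨?_, ?_, ?_, ?_, ?_⟩, ?_, ?_⟩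
      · simp; omega
      · simp; omega
      · exact (ok_replicate_append hp hm w).2 okw
      · exact (ok_replicate_append hp hm w').2 okw'
      · simpa using hd
      · simp
      · simp
  rw [hcard, Finset.card_map]

lemma off_fiber {p n : ℕ} (hp : 0 < p) {ka kb : ℕ} (hab : ka < kb) (hkb : kb < p)
    (hn : p ≤ n) :
    ((EF p n).filter fun q => (f0 q.1, f0 q.2) = (ka, kb)).card = (VF p (n - kb - 1)).card := by
  have hcard : ((EF p n).filter fun q => (f0 q.1, f0 q.2) = (ka, kb)) =
      (VF p (n - kb - 1)).map
        ⟨fun w => (List.replicate ka true ++ false ::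
            (List.replicate (kb - ka - 1) true ++ false :: w),
          List.replicate kb true ++ false :: w),
          by
            intro a b h
            simp only [Prod.mk.injEq] at h
            have := List.append_cancel_left h.2
            simp_all⟩ := by
    ext ⟨a, b⟩
    simp only [Finset.mem_filter, Finset.mem_map, mem_EF, mem_VF, Prod.mk.injEq,
      Function.Embedding.coeFn_mk]
    constructor
    · rintro ⟨⟨ha, hb, oka, okb, hd⟩, hfa, hfb⟩
      obtain ⟨x, hx⟩ := f0_decomp a (by omega)
      obtain ⟨w, hw⟩ := f0_decomp b (by omega)
      rw [hfa] at hx; rw [hfb] at hw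
      have hlx : x.length = n - ka - 1 := by
        have := congrArg List.length hx; simp at this; omega
      have hlw : w.length = n - kb - 1 := by
        have := congrArg List.length hw; simp at this; omega
      have hxX : x = List.replicate (kb - ka - 1) true ++ false :: w := by
        apply eq_of_ndiff_eq_zero
        · simp; omega
        · rw [hx, hw, split_rep hab] at hd
          rw [ndiff_append_left] at hd
          simpa using hd
      refine ⟨w, ⟨hlw, (ok_replicate_append hp hkb w).1 (hw ▸ okb)⟩, ?_⟩
      subst hx hw; rw [hxX]; rfl
    · rintro ⟨w, ⟨hlw, okw⟩, rfl, rfl⟩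
      have hkan : ka < n := by omega
      refine ⟨⟨?_, ?_, ?_, ?_, ?_⟩, ?_, ?_⟩
      · simp; omega
      · simp; omega
      · refine (ok_replicate_append hp (by omega) _).2 ?_
        exact (ok_replicate_append hp (by omega) w).2 okw
      · exact (ok_replicate_append hp hkb w).2 okw
      · rw [split_rep hab, ndiff_append_left]
        simp
      · simp
      · simp
  rw [hcard, Finset.card_map]

lemma swap_fiber (p n ka kb : ℕ) :
    ((EF p n).filter fun q => (f0 q.1, f0 q.2) = (ka, kb)).card =
      ((EF p n).filter fun q => (f0 q.1, f0 q.2) = (kb, ka)).card := by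
  have himg : ((EF p n).filter fun q => (f0 q.1, f0 q.2) = (ka, kb)) =
      Finset.image Prod.swap ((EF p n).filter fun q => (f0 q.1, f0 q.2) = (kb, ka)) := by
    ext ⟨a, b⟩
    simp only [Finset.mem_filter, Finset.mem_image, mem_EF, Prod.mk.injEq]
    constructor
    · rintro ⟨⟨h1, h2, h3, h4, h5⟩, h6, h7⟩
      exact ⟨(b, a), ⟨⟨h2, h1, h4, h3, by rw [ndiff_comm]; exact h5⟩, h7, h6⟩, rfl⟩
    · rintro ⟨⟨c, d⟩, ⟨⟨h1, h2, h3, h4, h5⟩, h6, h7⟩, hs⟩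
      obtain ⟨rfl, rfl⟩ : d = a ∧ c = b := by simpa [Prod.ext_iff] using hs
      exact ⟨⟨h2, h1, h4, h3, by rw [ndiff_comm]; exact h5⟩, h7, h6⟩
  rw [himg, Finset.card_image_of_injective _ Prod.swap_injective]

end FibAux

namespace FibAux

lemma sum_if_max (P : ℕ) (X Y : ℕ → ℕ) :
    ∑ a ∈ Finset.range P, ∑ b ∈ Finset.range P, (if a = b then X a else Y (max a b)) =
      (∑ m ∈ Finset.range P, X m) + ∑ r ∈ Finset.range P, 2 * r * Y r := by
  induction P with
  | zero => simp
  | succ P ih =>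
    rw [Finset.sum_range_succ]
    have h1 : ∀ a ∈ Finset.range P,
        (∑ b ∈ Finset.range (P+1), (if a = b then X a else Y (max a b))) =
          (∑ b ∈ Finset.range P, (if a = b then X a else Y (max a b))) + Y P := by
      intro a ha
      rw [Finset.sum_range_succ]
      congr 1
      rw [Finset.mem_range] at ha
      rw [if_neg (by omega), max_eq_right (by omega)]
    have h2 : (∑ b ∈ Finset.range (P+1), (if P = b then X P else Y (max P b))) =
        P * Y P + X P := by
      rw [Finset.sum_range_succ, if_pos rfl]
      congr 1
      rw [Finset.sum_congr rfl (fun b hb => ?_), Finset.sum_const, Finset.card_range,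
        smul_eq_mul]
      rw [Finset.mem_range] at hb
      rw [if_neg (by omega), max_eq_left (by omega)]
    rw [Finset.sum_congr rfl h1, Finset.sum_add_distrib, Finset.sum_const,
      Finset.card_range, smul_eq_mul, ih, h2, Finset.sum_range_succ,
      Finset.sum_range_succ (fun r => 2 * r * Y r)]
    ring

set_option maxHeartbeats 1000000 in
lemma EF_card_rec {p n : ℕ} (hp : 0 < p) (hn : p ≤ n) :
    (EF p n).card = (∑ m ∈ Finset.range p, (EF p (n - m - 1)).card)
      + ∑ r ∈ Finset.range p, 2 * r * (VF p (n - r - 1)).card := by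
  have hmap : ∀ q ∈ EF p n, (f0 q.1, f0 q.2) ∈ Finset.range p ×ˢ Finset.range p := by
    rintro ⟨a, b⟩ hq
    rw [mem_EF] at hq
    obtain ⟨h1, h2, h3, h4, -⟩ := hq
    dsimp only at h1 h2 h3 h4
    simp only [Finset.mem_product, Finset.mem_range]
    exact ⟨f0_lt_of_ok h3 (by omega), f0_lt_of_ok h4 (by omega)⟩
  rw [Finset.card_eq_sum_card_fiberwise hmap, Finset.sum_product]
  have hpt : ∀ a ∈ Finset.range p, ∀ b ∈ Finset.range p,
      ((EF p n).filter fun q => (f0 q.1, f0 q.2) = (a, b)).card =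
        if a = b then (EF p (n - a - 1)).card else (VF p (n - max a b - 1)).card := by
    intro a ha b hb
    rw [Finset.mem_range] at ha hb
    by_cases hab : a = b
    · subst hab
      rw [if_pos rfl, diag_fiber hp ha hn]
    · rw [if_neg hab]
      rcases lt_or_gt_of_ne hab with h | h
      · rw [off_fiber hp h hb hn, max_eq_right h.le]
      · rw [swap_fiber, off_fiber hp h ha hn, max_eq_left h.le]
  refine Eq.trans (Finset.sum_congr rfl fun a ha => Finset.sum_congr rfl fun b hb => hpt a ha b hb) ?_
  exact sum_if_max p (fun m => (EF p (n - m - 1)).card) (fun r => (VF p (n - r - 1)).card)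

lemma exists_ofFn {n : ℕ} (l : List Bool) (h : l.length = n) :
    ∃ u : Fin n → Bool, List.ofFn u = l := by
  subst h
  exact ⟨l.get, List.ofFn_get l⟩

lemma vCount_eq (p n : ℕ) : vCount p n = (VF p n).card := by
  have himg : List.ofFn '' {u : Fin n → Bool | gVert p n u} = ↑(VF p n) := by
    ext l
    simp only [Set.mem_image, Set.mem_setOf_eq, Finset.coe_filter, VF, Set.mem_setOf_eq,
      mem_allB]
    constructor
    · rintro ⟨u, hu, rfl⟩
      exact ⟨by simp, hu⟩
    · rintro ⟨hl, hok⟩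
      obtain ⟨u, rfl⟩ := exists_ofFn l hl
      exact ⟨u, hok, rfl⟩
  rw [vCount, ← Set.ncard_image_of_injective _ List.ofFn_injective, himg,
    Set.ncard_coe_finset]

lemma hDist_eq : ∀ {n : ℕ} (u v : Fin n → Bool),
    hDist u v = ndiff (List.ofFn u) (List.ofFn v) := by
  intro n
  induction n with
  | zero => intro u v; simp [hDist, ndiff]
  | succ n ih =>
    intro u v
    rw [List.ofFn_succ, List.ofFn_succ, ndiff_cons, ← ih]
    unfold hDist
    rw [Finset.card_filter, Finset.card_filter, Fin.sum_univ_succ]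
    congr 1
    by_cases h : u 0 = v 0 <;> simp [h]

lemma hDist_comm {n : ℕ} (u v : Fin n → Bool) : hDist u v = hDist v u := by
  rw [hDist_eq, hDist_eq, ndiff_comm]

lemma eCount_eq (p n : ℕ) : 2 * eCount p n = (EF p n).card := by
  classical
  set Sfin : Finset (Sym2 (Fin n → Bool)) := Finset.univ.filter
    (fun e => ∃ u v, e = s(u, v) ∧ gVert p n u ∧ gVert p n v ∧ hDist u v = 1) with hSdef
  have h0 : eCount p n = Sfin.card := by
    rw [eCount, ← Set.ncard_coe_finset]
    congr 1
    ext e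
    simp [hSdef]
  set Pfin : Finset ((Fin n → Bool) × (Fin n → Bool)) := Finset.univ.filter
    (fun q => gVert p n q.1 ∧ gVert p n q.2 ∧ hDist q.1 q.2 = 1) with hPdef
  have hmap : ∀ q ∈ Pfin, s(q.1, q.2) ∈ Sfin := by
    rintro ⟨u, v⟩ hq
    simp only [hPdef, Finset.mem_filter, Finset.mem_univ, true_and] at hq
    simp only [hSdef, Finset.mem_filter, Finset.mem_univ, true_and]
    exact ⟨u, v, rfl, hq⟩
  have h2 : ∀ e ∈ Sfin, (Pfin.filter fun q => s(q.1, q.2) = e).card = 2 := by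
    intro e he
    simp only [hSdef, Finset.mem_filter, Finset.mem_univ, true_and] at he
    obtain ⟨u, v, rfl, hu, hv, hd⟩ := he
    have hne : u ≠ v := by
      intro h
      subst h
      rw [hDist_eq, ndiff_self] at hd
      simp at hd
    have hset : (Pfin.filter fun q => s(q.1, q.2) = s(u, v)) = {(u, v), (v, u)} := by
      ext ⟨x, y⟩
      simp only [hPdef, Finset.mem_filter, Finset.mem_univ, true_and, Finset.mem_insert,
        Finset.mem_singleton, Prod.mk.injEq, Sym2.eq_iff]
      constructor
      · rintro ⟨-, (⟨rfl, rfl⟩ | ⟨rfl, rfl⟩)⟩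
        · exact Or.inl ⟨rfl, rfl⟩
        · exact Or.inr ⟨rfl, rfl⟩
      · rintro (⟨rfl, rfl⟩ | ⟨rfl, rfl⟩)
        · exact ⟨⟨hu, hv, hd⟩, Or.inl ⟨rfl, rfl⟩⟩
        · exact ⟨⟨hv, hu, by rw [hDist_comm]; exact hd⟩, Or.inr ⟨rfl, rfl⟩⟩
    rw [hset, Finset.card_insert_of_notMem (by
        simp only [Finset.mem_singleton, Prod.mk.injEq]
        rintro ⟨h, -⟩
        exact hne h), Finset.card_singleton]
  have h1 : Pfin.card = 2 * Sfin.card := by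
    rw [Finset.card_eq_sum_card_fiberwise hmap, Finset.sum_congr rfl h2,
      Finset.sum_const, smul_eq_mul, mul_comm]
  have h3 : (EF p n).card = Pfin.card := by
    have himg : EF p n = Pfin.image (fun q => (List.ofFn q.1, List.ofFn q.2)) := by
      ext ⟨a, b⟩
      simp only [mem_EF, Finset.mem_image, hPdef, Finset.mem_filter, Finset.mem_univ,
        true_and, Prod.mk.injEq]
      constructor
      · rintro ⟨ha, hb, oka, okb, hd⟩
        obtain ⟨u, rfl⟩ := exists_ofFn a ha
        obtain ⟨v, rfl⟩ := exists_ofFn b hb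
        exact ⟨(u, v), ⟨oka, okb, by rw [hDist_eq]; exact hd⟩, rfl, rfl⟩
      · rintro ⟨⟨u, v⟩, ⟨h1, h2, h3⟩, rfl, rfl⟩
        exact ⟨by simp, by simp, h1, h2, by rw [← hDist_eq]; exact h3⟩
    rw [himg, Finset.card_image_of_injective]
    rintro ⟨u, v⟩ ⟨u', v'⟩ h
    simp only [Prod.mk.injEq] at h
    exact Prod.ext (List.ofFn_injective h.1) (List.ofFn_injective h.2)
  omega

end FibAux

/-- For `p ≥ 2` and `n ≥ p`,
`|E(Γ^{(p)}_n)| = ∑_{i=1}^{p} |E(Γ^{(p)}_{n-i})| + ∑_{i=2}^{p} (i-1)|V(Γ^{(p)}_{n-i})|`. -/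
theorem stmt11 (p n : ℕ) (hp : 2 ≤ p) (hn : p ≤ n) :
    eCount p n = (∑ i ∈ Finset.Icc 1 p, eCount p (n - i))
      + ∑ i ∈ Finset.Icc 2 p, (i - 1) * vCount p (n - i) := by
  have hp0 : 0 < p := by omega
  apply Nat.eq_of_mul_eq_mul_left (show 0 < 2 by norm_num)
  rw [Nat.mul_add, FibAux.eCount_eq p n, FibAux.EF_card_rec hp0 hn]
  congr 1
  · rw [Finset.mul_sum, ← Finset.Ico_add_one_right_eq_Icc, Finset.sum_Ico_eq_sum_range]
    have hr1 : p + 1 - 1 = p := by omega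
    rw [hr1]
    apply Finset.sum_congr rfl
    intro i _
    rw [FibAux.eCount_eq]
    have : n - (1 + i) = n - i - 1 := by omega
    rw [this]
  · have hsplit : ∀ f : ℕ → ℕ, f 0 = 0 →
        (∑ r ∈ Finset.range p, f r) = ∑ k ∈ Finset.range (p - 1), f (k + 1) := by
      intro f hf
      obtain ⟨q, rfl⟩ : ∃ q, p = q + 1 := ⟨p - 1, by omega⟩
      rw [Finset.sum_range_succ', hf, add_zero, Nat.add_sub_cancel]
    rw [hsplit _ (by simp), Finset.mul_sum, ← Finset.Ico_add_one_right_eq_Icc,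
      Finset.sum_Ico_eq_sum_range]
    have hr : p + 1 - 2 = p - 1 := by omega
    rw [hr]
    apply Finset.sum_congr rfl
    intro k _
    rw [FibAux.vCount_eq]
    have h1 : 2 + k - 1 = k + 1 := by omega
    have h2 : n - (2 + k) = n - (k + 1) - 1 := by omega
    rw [h1, h2, mul_assoc]
end

section
/- For p ≥ 2, n ≥ 0, k ≥ 0, d ≥ 0, the number of induced subgraphs of the p-th order Fibonacci cube Γ^{(p)}_n isomorphic to the hypercube Q_k whose bottom vertex is at Hamming distance d from the all-zeros string equals [n-d-k+1 choose d+k]_{p-1} · C(d+k, k), where [·]_{p-1} is the p-nomial coefficient and C the binomial coefficient. -/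
open scoped Classical

/-- The Hamming weight of a binary string of length `n`. -/
noncomputable def weightF {n : ℕ} (u : Fin n → Bool) : ℕ :=
  (Finset.univ.filter fun i => u i = true).card

/-- The vertex set of the induced subcube of `Q_n` with bottom vertex `b` and support
`S` (the set of coordinates that vary): all strings agreeing with `b` outside `S`.
Together with the normalization `b i = false` for `i ∈ S`, such pairs `(b, S)` are in
bijection with the induced subgraphs of `Q_n` isomorphic to hypercubes. -/
def subcubeVerts {n : ℕ} (b : Fin n → Bool) (S : Finset (Fin n)) :
    Set (Fin n → Bool) :=
  {u | ∀ i ∉ S, u i = b i}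

/-! ### Auxiliary definitions -/

def extB (j : ℕ) {n : ℕ} (u : Fin n → Bool) (m : ℕ) : Bool :=
  if m < j then true else if h : m - j < n then u ⟨m - j, h⟩ else false

def goodE (p j : ℕ) {n : ℕ} (u : Fin n → Bool) : Prop :=
  ¬ ∃ i, i + p ≤ j + n ∧ ∀ l < p, extB j u (i + l) = true

lemma extB_zero {n : ℕ} (u : Fin n → Bool) (m : ℕ) :
    extB 0 u m = if h : m < n then u ⟨m, h⟩ else false := by
  simp [extB]

lemma infix_iff {p n : ℕ} (u : Fin n → Bool) :
    (List.replicate p true) <:+: List.ofFn u ↔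
      ∃ i, i + p ≤ n ∧ ∀ l < p, extB 0 u (i + l) = true := by
  constructor
  · rintro ⟨s, t, h⟩
    refine ⟨s.length, ?_, ?_⟩
    · have := congrArg List.length h
      simp at this
      omega
    · intro l hl
      have hlen : s.length + p + t.length = n := by
        have := congrArg List.length h
        simp at this
        omega
      have hlt : s.length + l < n := by omega
      have hidx : s.length + l < (s ++ List.replicate p true ++ t).length := by
        simp only [List.length_append, List.length_replicate]; omega
      have hb1 : s.length + l < (s ++ List.replicate p true).length := by
        simp only [List.length_append, List.length_replicate]; omega
      have h1 : (s ++ List.replicate p true ++ t)[s.length + l]'hidx = true := by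
        rw [List.getElem_append_left hb1, List.getElem_append_right (by omega)]
        simp
      have h2 := (List.getElem_of_eq h hidx).symm.trans h1
      rw [List.getElem_ofFn] at h2
      rw [extB_zero]
      simp only [hlt, dif_pos]
      convert h2 using 2
  · rintro ⟨i, hip, hall⟩
    have heq : List.replicate p true = ((List.ofFn u).drop i).take p := by
      apply List.ext_getElem
      · simp only [List.length_replicate, List.length_take, List.length_drop,
          List.length_ofFn]
        omega
      · intro j h1 h2
        simp only [List.getElem_replicate, List.getElem_take, List.getElem_drop,
          List.getElem_ofFn]
        have hj : j < p := by simpa using h1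
        have := hall j hj
        rw [extB_zero] at this
        simp only [show i + j < n by omega, dif_pos] at this
        exact this.symm
    rw [heq]
    exact ((List.take_prefix _ _).isInfix).trans ((List.drop_suffix _ _).isInfix)

lemma gVert_iff {p n : ℕ} (u : Fin n → Bool) : gVert p n u ↔ goodE p 0 u := by
  unfold gVert goodE
  rw [infix_iff]
  simp

lemma not_goodE_of_ge (p j : ℕ) {n : ℕ} (u : Fin n → Bool) (h : p ≤ j) :
    ¬ goodE p j u := by
  exact fun hg => hg ⟨0, by omega, fun l hl => by
    unfold extB; rw [if_pos (by omega : 0 + l < j)]⟩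

lemma extB_cons_true (j : ℕ) {n : ℕ} (v : Fin n → Bool) (m : ℕ) :
    extB j (Fin.cons true v : Fin (n+1) → Bool) m = extB (j+1) v m := by
  unfold extB
  rcases lt_trichotomy m j with h | h | h
  · simp [h, show m < j + 1 by omega]
  · subst h
    simp [show ¬ (m < m) by omega, show m - m < m + 1 by omega]
  · have h1 : ¬ m < j := by omega
    have h2 : ¬ m < j + 1 := by omega
    simp only [h1, h2, if_false]
    rcases Nat.lt_or_ge (m - j) (n + 1) with h3 | h3
    · have h3' : m - (j+1) < n := by omega
      simp only [h3, dif_pos, h3', dif_pos]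
      have he : (⟨m - j, h3⟩ : Fin (n+1)) = Fin.succ ⟨m - (j+1), h3'⟩ := by
        ext; simp; omega
      rw [he, Fin.cons_succ]
    · have h3' : ¬ m - (j+1) < n := by omega
      simp [show ¬ m - j < n + 1 by omega, h3']

lemma goodE_cons_true (p j : ℕ) {n : ℕ} (v : Fin n → Bool) :
    goodE p j (Fin.cons true v : Fin (n+1) → Bool) ↔ goodE p (j+1) v := by
  unfold goodE
  constructor
  · intro h ⟨i, hi, hall⟩
    exact h ⟨i, by omega, fun l hl => by rw [extB_cons_true]; exact hall l hl⟩
  · intro h ⟨i, hi, hall⟩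
    exact h ⟨i, by omega, fun l hl => by rw [← extB_cons_true j v]; exact hall l hl⟩

lemma goodE_cons_false (p j : ℕ) {n : ℕ} (v : Fin n → Bool) (hj : j < p) :
    goodE p j (Fin.cons false v : Fin (n+1) → Bool) ↔ goodE p 0 v := by
  unfold goodE
  constructor
  · intro h ⟨i, hi, hall⟩
    refine h ⟨i + j + 1, by omega, fun l hl => ?_⟩
    have := hall l hl
    rw [extB_zero] at this
    have hiln : i + l < n := by omega
    simp only [hiln, dif_pos] at this
    unfold extB
    have h1 : ¬ i + j + 1 + l < j := by omega
    have h2 : i + j + 1 + l - j < n + 1 := by omega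
    simp only [h1, if_false, h2, dif_pos]
    have he : (⟨i + j + 1 + l - j, h2⟩ : Fin (n+1)) = Fin.succ ⟨i + l, hiln⟩ := by
      ext; simp; omega
    rw [he, Fin.cons_succ]
    exact this
  · intro h ⟨i, hi, hall⟩
    rcases Nat.lt_or_ge j (i + p) with hcase | hcase
    · rcases Nat.lt_or_ge j i with hj2 | hj2
      · refine h ⟨i - (j + 1), by omega, fun l hl => ?_⟩
        have := hall l hl
        unfold extB at this
        have h1 : ¬ i + l < j := by omega
        have h2 : i + l - j < n + 1 := by omega
        simp only [h1, if_false, h2, dif_pos] at this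
        have h3 : i + l - j - 1 < n := by omega
        have he : (⟨i + l - j, h2⟩ : Fin (n+1)) = Fin.succ ⟨i + l - j - 1, h3⟩ := by
          ext; simp; omega
        rw [he, Fin.cons_succ] at this
        rw [extB_zero]
        have h4 : i - (j+1) + l < n := by omega
        simp only [h4, dif_pos]
        have he2 : (⟨i - (j+1) + l, h4⟩ : Fin n) = ⟨i + l - j - 1, h3⟩ := by
          ext; simp; omega
        rw [he2]
        exact this
      · have := hall (j - i) (by omega)
        unfold extB at this
        have h1 : ¬ i + (j - i) < j := by omega
        have h2 : i + (j - i) - j < n + 1 := by omega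
        simp only [h1, if_false, h2, dif_pos] at this
        have he : (⟨i + (j - i) - j, h2⟩ : Fin (n+1)) = 0 := by
          ext; simp; omega
        rw [he, Fin.cons_zero] at this
        exact Bool.false_ne_true this
    · omega

lemma goodE_nil (p j : ℕ) (u : Fin 0 → Bool) : goodE p j u ↔ j < p := by
  constructor
  · intro h
    by_contra hc
    exact not_goodE_of_ge p j u (by omega) h
  · intro hjp ⟨i, hi, hall⟩
    omega

lemma goodE_mono {p n : ℕ} {u v : Fin n → Bool}
    (hm : ∀ i, u i = true → v i = true) (hv : goodE p 0 v) : goodE p 0 u := by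
  intro ⟨i, hi, hall⟩
  refine hv ⟨i, hi, fun l hl => ?_⟩
  have := hall l hl
  rw [extB_zero] at this ⊢
  rcases Nat.lt_or_ge (i + l) n with h | h
  · simp only [h, dif_pos] at this ⊢
    exact hm _ this
  · simp only [h, dif_neg, not_lt.2 h] at this
    simp at this

lemma weightF_cons {n : ℕ} (b : Bool) (v : Fin n → Bool) :
    weightF (Fin.cons b v : Fin (n+1) → Bool) = (if b then 1 else 0) + weightF v := by
  unfold weightF
  rw [Finset.card_filter, Finset.card_filter, Fin.sum_univ_succ]
  simp [Fin.cons_succ]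

noncomputable def D (p j n w : ℕ) : ℕ :=
  (Finset.univ.filter fun u : Fin n → Bool => weightF u = w ∧ goodE p j u).card

lemma D_of_ge (p j n w : ℕ) (h : p ≤ j) : D p j n w = 0 := by
  unfold D
  rw [Finset.card_eq_zero, Finset.filter_eq_empty_iff]
  exact fun u _ hu => not_goodE_of_ge p j u h hu.2

lemma D_zero (p j w : ℕ) : D p j 0 w = if j < p ∧ w = 0 then 1 else 0 := by
  unfold D
  by_cases h : j < p ∧ w = 0
  · rw [if_pos h, Finset.filter_true_of_mem, Finset.card_univ]
    · simp
    · intro u _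
      refine ⟨by simp [weightF, h.2], (goodE_nil p j u).2 h.1⟩
  · rw [if_neg h, Finset.card_eq_zero, Finset.filter_eq_empty_iff]
    intro u _ hu
    rw [goodE_nil] at hu
    have : weightF u = 0 := by simp [weightF]
    omega

lemma D_succ_false (p j n w : ℕ) (hj : j < p) :
    ((Finset.univ.filter
        fun u : Fin (n+1) → Bool => weightF u = w ∧ goodE p j u).filter
        fun u => u 0 = false).card = D p 0 n w := by
  unfold D
  apply Finset.card_nbij' (fun u => Fin.tail u) (fun v => Fin.cons false v)
  · intro u hu
    simp only [Finset.mem_coe, Finset.mem_filter, Finset.mem_univ, true_and] at hu ⊢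
    obtain ⟨⟨hw, hg⟩, h0⟩ := hu
    have hu' : u = Fin.cons false (Fin.tail u) := by
      rw [← h0]; exact (Fin.cons_self_tail u).symm
    constructor
    · rw [hu', weightF_cons] at hw; simpa using hw
    · rw [hu'] at hg
      exact (goodE_cons_false p j _ hj).1 hg
  · intro v hv
    simp only [Finset.mem_coe, Finset.mem_filter, Finset.mem_univ, true_and] at hv ⊢
    refine ⟨⟨?_, (goodE_cons_false p j _ hj).2 hv.2⟩, Fin.cons_zero _ _⟩
    rw [weightF_cons]; simpa using hv.1
  · intro u hu
    simp only [Finset.mem_coe, Finset.mem_filter] at hu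
    rw [← hu.2]
    exact Fin.cons_self_tail u
  · intro v _
    exact Fin.tail_cons _ _

lemma D_succ_true (p j n w : ℕ) (hw : ¬ w = 0) :
    ((Finset.univ.filter
        fun u : Fin (n+1) → Bool => weightF u = w ∧ goodE p j u).filter
        fun u => ¬ u 0 = false).card = D p (j+1) n (w-1) := by
  unfold D
  apply Finset.card_nbij' (fun u => Fin.tail u) (fun v => Fin.cons true v)
  · intro u hu
    simp only [Finset.mem_coe, Finset.mem_filter, Finset.mem_univ, true_and] at hu ⊢
    obtain ⟨⟨hwt, hg⟩, h0⟩ := hu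
    have h0' : u 0 = true := by
      cases h : u 0
      · exact absurd h h0
      · rfl
    have hu' : u = Fin.cons true (Fin.tail u) := by
      rw [← h0']; exact (Fin.cons_self_tail u).symm
    constructor
    · rw [hu', weightF_cons] at hwt
      simp only [if_pos] at hwt
      omega
    · rw [hu'] at hg
      exact (goodE_cons_true p j _).1 hg
  · intro v hv
    simp only [Finset.mem_coe, Finset.mem_filter, Finset.mem_univ, true_and] at hv ⊢
    refine ⟨⟨?_, (goodE_cons_true p j _).2 hv.2⟩, by simp⟩
    rw [weightF_cons]
    simp only [if_pos]
    omega
  · intro u hu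
    simp only [Finset.mem_coe, Finset.mem_filter] at hu
    have h0' : u 0 = true := by
      cases h : u 0
      · exact absurd h hu.2
      · rfl
    rw [← h0']
    exact Fin.cons_self_tail u
  · intro v _
    exact Fin.tail_cons _ _

lemma D_succ_true_zero (p j n : ℕ) :
    ((Finset.univ.filter
        fun u : Fin (n+1) → Bool => weightF u = 0 ∧ goodE p j u).filter
        fun u => ¬ u 0 = false).card = 0 := by
  rw [Finset.card_eq_zero, Finset.filter_eq_empty_iff]
  intro u hu hu0
  simp only [Finset.mem_filter, Finset.mem_univ, true_and] at hu
  have h0 : u 0 = true := by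
    cases h : u 0
    · exact absurd h hu0
    · rfl
  have hu' : u = Fin.cons true (Fin.tail u) := by
    rw [← h0]; exact (Fin.cons_self_tail u).symm
  have := hu.1
  rw [hu', weightF_cons] at this
  simp at this

lemma D_succ (p j n w : ℕ) :
    D p j (n+1) w = (if j < p then D p 0 n w else 0)
      + (if w = 0 then 0 else D p (j+1) n (w-1)) := by
  by_cases hj : j < p
  swap
  · rw [if_neg hj, D_of_ge p j _ _ (by omega), D_of_ge p (j+1) _ _ (by omega)]
    simp
  rw [if_pos hj]
  have hsplit := Finset.card_filter_add_card_filter_not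
    (s := Finset.univ.filter
      fun u : Fin (n+1) → Bool => weightF u = w ∧ goodE p j u)
    (p := fun u => u 0 = false)
  rw [D_succ_false p j n w hj] at hsplit
  by_cases hw : w = 0
  · subst hw
    rw [D_succ_true_zero p j n] at hsplit
    rw [if_pos rfl]
    unfold D at hsplit ⊢
    omega
  · rw [D_succ_true p j n w hw] at hsplit
    rw [if_neg hw]
    unfold D at hsplit ⊢
    omega

/-! ### The polynomial side -/

open Polynomial in
noncomputable def qp (p : ℕ) : Polynomial ℕ := ∑ i ∈ Finset.range p, X ^ i

open Polynomial in
noncomputable def rp (p j : ℕ) : Polynomial ℕ := ∑ i ∈ Finset.range (p - j), X ^ i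

noncomputable def E (p j n w : ℕ) : ℕ :=
  if w ≤ n then (rp p j * qp p ^ (n - w)).coeff w else 0

lemma rp_zero (p : ℕ) : rp p 0 = qp p := by simp [rp, qp]

lemma rp_of_ge (p j : ℕ) (h : p ≤ j) : rp p j = 0 := by
  simp [rp, Nat.sub_eq_zero_of_le h]

lemma coeff_rp (p j a : ℕ) : (rp p j).coeff a = if a < p - j then 1 else 0 := by
  unfold rp
  rw [Polynomial.finset_sum_coeff]
  simp only [Polynomial.coeff_X_pow]
  rw [Finset.sum_ite_eq (Finset.range (p - j)) a (fun _ => 1)]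
  simp [Finset.mem_range]

open Polynomial in
lemma rp_succ (p j : ℕ) (hj : j < p) : rp p j = 1 + X * rp p (j + 1) := by
  unfold rp
  have h : p - j = (p - (j + 1)) + 1 := by omega
  rw [h, Finset.sum_range_succ']
  simp only [pow_succ', pow_zero]
  rw [← Finset.mul_sum]
  ring

lemma coeff_zero_pow_qp (p m : ℕ) (hp : 0 < p) : ((qp p) ^ m).coeff 0 = 1 := by
  have h1 : (qp p).coeff 0 = 1 := by
    rw [← rp_zero, coeff_rp]
    simp [hp]
  have := map_pow (Polynomial.constantCoeff (R := ℕ)) (qp p) m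
  simp only [Polynomial.constantCoeff_apply] at this
  rw [this, h1, one_pow]

lemma E_zero (p j w : ℕ) : E p j 0 w = if j < p ∧ w = 0 then 1 else 0 := by
  unfold E
  rcases Nat.eq_zero_or_pos w with hw | hw
  · subst hw
    rw [if_pos (le_refl 0), pow_zero, mul_one, coeff_rp]
    split_ifs <;> omega
  · rw [if_neg (by omega)]
    rw [if_neg (by omega)]

lemma E_succ (p j n w : ℕ) :
    E p j (n+1) w = (if j < p then E p 0 n w else 0)
      + (if w = 0 then 0 else E p (j+1) n (w-1)) := by
  by_cases hj : j < p
  swap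
  · have h1 : rp p j = 0 := rp_of_ge p j (by omega)
    have h2 : rp p (j+1) = 0 := rp_of_ge p (j+1) (by omega)
    simp [E, h1, h2, hj]
  rw [if_pos hj]
  have hp : 0 < p := by omega
  by_cases hw : w = 0
  · subst hw
    rw [if_pos rfl, add_zero]
    unfold E
    rw [if_pos (Nat.zero_le _), if_pos (Nat.zero_le _)]
    rw [Polynomial.mul_coeff_zero, Polynomial.mul_coeff_zero]
    rw [coeff_rp, coeff_rp]
    rw [coeff_zero_pow_qp p _ hp, coeff_zero_pow_qp p _ hp]
    simp only [Nat.sub_zero]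
    rw [if_pos (by omega), if_pos (by omega)]
  · rw [if_neg hw]
    rcases Nat.lt_trichotomy w (n+1) with h | h | h
    · have hwn : w ≤ n := by omega
      unfold E
      rw [if_pos (by omega), if_pos hwn, if_pos (by omega)]
      have key : (rp p j * qp p ^ (n + 1 - w)).coeff w
          = (qp p ^ (n + 1 - w)).coeff w
            + (rp p (j+1) * qp p ^ (n + 1 - w)).coeff (w - 1) := by
        rw [rp_succ p j hj, add_mul, one_mul, Polynomial.coeff_add, mul_assoc]
        congr 1
        have hw1 : w = (w - 1) + 1 := by omega
        have hx := Polynomial.coeff_X_mul (rp p (j+1) * qp p ^ (n + 1 - w)) (w - 1)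
        rw [← hw1] at hx
        exact hx
      rw [key, rp_zero, ← pow_succ']
      have e1 : n + 1 - w = n - w + 1 := by omega
      have e2 : n - (w - 1) = n - w + 1 := by omega
      rw [e1, e2]
    · subst h
      unfold E
      rw [if_pos (le_refl _), if_neg (by omega), if_pos (by omega)]
      rw [Nat.sub_self, pow_zero, mul_one, coeff_rp]
      have : n + 1 - 1 = n := by omega
      rw [this, Nat.sub_self, pow_zero, mul_one, coeff_rp]
      split_ifs <;> omega
    · unfold E
      rw [if_neg (by omega), if_neg (by omega), if_neg (by omega)]

lemma D_eq_E (p : ℕ) : ∀ n j w, D p j n w = E p j n w := by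
  intro n
  induction n with
  | zero => intro j w; rw [D_zero, E_zero]
  | succ n ih =>
    intro j w
    rw [D_succ, E_succ, ih, ih]

/-! ### The top vertex reduction -/

def topF {n : ℕ} (b : Fin n → Bool) (S : Finset (Fin n)) : Fin n → Bool :=
  fun i => if i ∈ S then true else b i

def botF {n : ℕ} (t : Fin n → Bool) (S : Finset (Fin n)) : Fin n → Bool :=
  fun i => if i ∈ S then false else t i

lemma subcube_iff {p n : ℕ} (b : Fin n → Bool) (S : Finset (Fin n)) :
    (∀ u ∈ subcubeVerts b S, gVert p n u) ↔ goodE p 0 (topF b S) := by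
  constructor
  · intro h
    rw [← gVert_iff]
    apply h
    intro i hi
    simp [topF, hi]
  · intro h u hu
    rw [gVert_iff]
    apply goodE_mono (v := topF b S) _ h
    intro i hi
    unfold topF
    by_cases hiS : i ∈ S
    · simp [hiS]
    · rw [if_neg hiS, ← hu i hiS]
      exact hi

lemma weight_topF {n : ℕ} (b : Fin n → Bool) (S : Finset (Fin n))
    (hb : ∀ i ∈ S, b i = false) :
    weightF (topF b S) = weightF b + S.card := by
  unfold weightF
  rw [← Finset.card_union_of_disjoint]
  · congr 1
    ext i
    simp only [Finset.mem_filter, Finset.mem_univ, true_and, Finset.mem_union]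
    unfold topF
    by_cases hiS : i ∈ S <;> simp [hiS]
  · rw [Finset.disjoint_right]
    intro i hi
    simp [hb i hi]

/-! ### The main theorem -/

/-- For `p ≥ 2`, the number of induced subgraphs of `Γ^{(p)}_n` isomorphic to `Q_k`
whose bottom vertex is at Hamming distance `d` from `0ⁿ` equals
`[n-d-k+1 choose d+k]_{p-1} ⬝ C(d+k, k)`. -/
theorem stmt14 (p n k d : ℕ) (hp : 2 ≤ p) :
    {bS : (Fin n → Bool) × Finset (Fin n) |
        bS.2.card = k ∧ (∀ i ∈ bS.2, bS.1 i = false) ∧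
        (∀ u ∈ subcubeVerts bS.1 bS.2, gVert p n u) ∧ weightF bS.1 = d}.ncard
      = pnomZ p ((n : ℤ) - d - k + 1) ((d : ℤ) + k) * (d + k).choose k := by
  classical
  rw [Set.ncard_eq_toFinset_card', Set.toFinset_setOf]
  set A := Finset.univ.filter
    (fun bS : (Fin n → Bool) × Finset (Fin n) =>
      bS.2.card = k ∧ (∀ i ∈ bS.2, bS.1 i = false) ∧
      (∀ u ∈ subcubeVerts bS.1 bS.2, gVert p n u) ∧ weightF bS.1 = d) with hA
  set G := Finset.univ.filter
    (fun t : Fin n → Bool => weightF t = d + k ∧ goodE p 0 t) with hG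
  have hmem : ∀ bS ∈ A, topF bS.1 bS.2 ∈ G := by
    intro bS hbS
    simp only [hA, Finset.mem_filter, Finset.mem_univ, true_and] at hbS
    obtain ⟨hcard, hb0, hsub, hwt⟩ := hbS
    simp only [hG, Finset.mem_filter, Finset.mem_univ, true_and]
    refine ⟨?_, (subcube_iff bS.1 bS.2).1 hsub⟩
    rw [weight_topF bS.1 bS.2 hb0, hwt, hcard]
  rw [Finset.card_eq_sum_card_fiberwise hmem]
  have hfiber : ∀ t ∈ G,
      (A.filter fun bS => topF bS.1 bS.2 = t).card = (d + k).choose k := by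
    intro t ht
    simp only [hG, Finset.mem_filter, Finset.mem_univ, true_and] at ht
    obtain ⟨hwt, hgt⟩ := ht
    have hsupp : (Finset.univ.filter fun i => t i = true).card = d + k := hwt
    rw [← hsupp, ← Finset.card_powersetCard]
    apply Finset.card_nbij' (fun bS => bS.2) (fun S => (botF t S, S))
    · intro bS hbS
      simp only [Finset.mem_coe, Finset.mem_filter] at hbS
      obtain ⟨hbA, hbt⟩ := hbS
      simp only [hA, Finset.mem_filter, Finset.mem_univ, true_and] at hbA
      rw [Finset.mem_coe, Finset.mem_powersetCard]
      refine ⟨?_, hbA.1⟩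
      intro i hi
      simp only [Finset.mem_filter, Finset.mem_univ, true_and]
      rw [← hbt]
      simp [topF, hi]
    · intro S hS
      rw [Finset.mem_coe, Finset.mem_powersetCard] at hS
      obtain ⟨hSsub, hScard⟩ := hS
      have hst : ∀ i ∈ S, t i = true := by
        intro i hi
        have := hSsub hi
        simpa using this
      have htop : topF (botF t S) S = t := by
        funext i
        unfold topF botF
        by_cases hiS : i ∈ S
        · simp [hiS, hst i hiS]
        · simp [hiS]
      have hb0 : ∀ i ∈ S, botF t S i = false := by
        intro i hi
        simp [botF, hi]
      have hwb : weightF (botF t S) = d := by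
        have := weight_topF (botF t S) S hb0
        rw [htop, hwt, hScard] at this
        omega
      simp only [Finset.mem_coe, Finset.mem_filter]
      constructor
      · simp only [hA, Finset.mem_filter, Finset.mem_univ, true_and]
        exact ⟨hScard, hb0, by rw [subcube_iff, htop]; exact hgt, hwb⟩
      · exact htop
    · intro bS hbS
      simp only [Finset.mem_coe, Finset.mem_filter] at hbS
      obtain ⟨hbA, hbt⟩ := hbS
      simp only [hA, Finset.mem_filter, Finset.mem_univ, true_and] at hbA
      have : botF t bS.2 = bS.1 := by
        funext i
        unfold botF
        by_cases hiS : i ∈ bS.2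
        · rw [if_pos hiS, (hbA.2.1 i hiS)]
        · rw [if_neg hiS, ← hbt]
          simp [topF, hiS]
      show (botF t bS.2, bS.2) = bS
      rw [this]
    · intro S _
      rfl
  rw [Finset.sum_congr rfl hfiber, Finset.sum_const, smul_eq_mul]
  have hGD : G.card = D p 0 n (d + k) := rfl
  rw [hGD, D_eq_E]
  congr 1
  -- E p 0 n (d+k) = pnomZ p (n - d - k + 1) (d + k)
  unfold E pnomZ
  rcases Nat.lt_trichotomy (d + k) (n + 1) with h | h | h
  · have hdk : d + k ≤ n := by omega
    rw [if_pos hdk, if_pos (by omega : (0:ℤ) ≤ (n : ℤ) - d - k + 1),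
      if_pos (by omega : (0:ℤ) ≤ (d : ℤ) + k)]
    have h1 : ((n : ℤ) - d - k + 1).toNat = n - (d + k) + 1 := by omega
    have h2 : ((d : ℤ) + k).toNat = d + k := by omega
    rw [h1, h2]
    unfold pnomial
    rw [rp_zero]
    show ((qp p) * (qp p) ^ (n - (d + k))).coeff (d + k)
      = ((qp p) ^ (n - (d + k) + 1)).coeff (d + k)
    rw [← pow_succ']
  · rw [if_neg (by omega), if_pos (by omega : (0:ℤ) ≤ (n : ℤ) - d - k + 1),
      if_pos (by omega : (0:ℤ) ≤ (d : ℤ) + k)]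
    have h1 : ((n : ℤ) - d - k + 1).toNat = 0 := by omega
    have h2 : ((d : ℤ) + k).toNat = d + k := by omega
    rw [h1, h2]
    unfold pnomial
    rw [pow_zero, Polynomial.coeff_one, if_neg (by omega)]
  · rw [if_neg (by omega), if_neg (by omega)]
end

section
/- For p ≥ 1 and 1 ≤ k ≤ n, the number of maximal induced hypercubes of dimension k in the Fibonacci p-cube Γ^p_n equals the (p+1)-nomial coefficient [k+1 choose n-(p+1)k+p]_p. -/
/-- A vertex of the Fibonacci `p`-cube `Γ^p_n`: a binary string of length `n` in which
any two `1`s are separated by at least `p` `0`s. -/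
def sepVert (p n : ℕ) (u : Fin n → Bool) : Prop :=
  ∀ i j : Fin n, i < j → u i = true → u j = true → (i : ℕ) + p + 1 ≤ (j : ℕ)

/-- `(b, S)` represents a maximal induced hypercube of `Γ^p_n`. -/
def IsMaxCube (p n : ℕ) (b : Fin n → Bool) (S : Finset (Fin n)) : Prop :=
  (∀ i ∈ S, b i = false) ∧
  (∀ u ∈ subcubeVerts b S, sepVert p n u) ∧
  ∀ (b' : Fin n → Bool) (S' : Finset (Fin n)), (∀ i ∈ S', b' i = false) →
    (∀ u ∈ subcubeVerts b' S', sepVert p n u) →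
    subcubeVerts b S ⊆ subcubeVerts b' S' → subcubeVerts b' S' = subcubeVerts b S

/-- The number of maximal induced hypercubes of dimension `k` in `Γ^p_n`. -/
noncomputable def hCount (p n k : ℕ) : ℕ :=
  {bS : (Fin n → Bool) × Finset (Fin n) |
    bS.2.card = k ∧ IsMaxCube p n bS.1 bS.2}.ncard

open Finset Polynomial

lemma coeff_pow_eq (f : Polynomial ℕ) (b a : ℕ) :
    (f ^ b).coeff a = ∑ g ∈ Finset.finAntidiagonal b a, ∏ i, f.coeff (g i) := by
  induction b generalizing a with
  | zero =>
    rcases eq_or_ne a 0 with rfl | h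
    · have h0 : Finset.finAntidiagonal 0 (0:ℕ) = {(fun i => i.elim0 : Fin 0 → ℕ)} := by
        ext g
        simp [Finset.mem_finAntidiagonal, Subsingleton.elim g (fun i => i.elim0)]
      simp [h0]
    · have h0 : Finset.finAntidiagonal 0 a = (∅ : Finset (Fin 0 → ℕ)) := by
        ext g
        simp [Finset.mem_finAntidiagonal, Ne.symm h]
      simp [h0, Polynomial.coeff_one, h]
  | succ b ih =>
    rw [pow_succ', Polynomial.coeff_mul]
    have : ∀ x : ℕ × ℕ, f.coeff x.1 * (f ^ b).coeff x.2
        = ∑ h ∈ Finset.finAntidiagonal b x.2, f.coeff x.1 * ∏ i, f.coeff (h i) := by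
      intro x; rw [ih, Finset.mul_sum]
    rw [Finset.sum_congr rfl (fun x _ => this x)]
    rw [← Finset.sum_sigma (antidiagonal a)
      (fun x => Finset.finAntidiagonal b x.2)
      (fun z => f.coeff z.1.1 * ∏ i, f.coeff (z.2 i))]
    refine Finset.sum_nbij' (i := fun z => Fin.cons z.1.1 z.2)
      (j := fun g => ⟨(g 0, ∑ i, g (Fin.succ i)), fun i => g (Fin.succ i)⟩) ?_ ?_ ?_ ?_ ?_
    · rintro ⟨⟨x1, x2⟩, h⟩ hz
      simp only [Finset.mem_sigma, Finset.HasAntidiagonal.mem_antidiagonal, Finset.mem_finAntidiagonal] at hz ⊢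
      rw [Fin.sum_univ_succ]
      simp only [Fin.cons_zero, Fin.cons_succ]
      rw [hz.2]; exact hz.1
    · intro g hg
      simp only [Finset.mem_finAntidiagonal] at hg
      simp only [Finset.mem_sigma, Finset.HasAntidiagonal.mem_antidiagonal, Finset.mem_finAntidiagonal]
      constructor
      · rw [← hg, Fin.sum_univ_succ]
      · trivial
    · rintro ⟨⟨x1, x2⟩, h⟩ hz
      simp only [Finset.mem_sigma, Finset.HasAntidiagonal.mem_antidiagonal, Finset.mem_finAntidiagonal] at hz
      simp only [Fin.cons_zero, Fin.cons_succ]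
      exact Sigma.ext (by simp [hz.2]) (by simp)
    · intro g hg
      exact Fin.cons_self_tail g
    · rintro ⟨⟨x1, x2⟩, h⟩ hz
      rw [Fin.prod_univ_succ]
      simp

lemma pnomial_eq_card (q b a : ℕ) :
    pnomial q b a
      = ((Finset.finAntidiagonal b a).filter (fun g : Fin b → ℕ => ∀ i, g i < q)).card := by
  rw [pnomial, coeff_pow_eq]
  have hc : ∀ j, (∑ i ∈ Finset.range q, (Polynomial.X : Polynomial ℕ) ^ i).coeff j
      = if j < q then 1 else 0 := by
    intro j
    rw [Polynomial.finset_sum_coeff]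
    simp only [Polynomial.coeff_X_pow]
    rw [Finset.sum_ite_eq (Finset.range q) j (fun _ => 1)]
    simp
  have h2 : ∀ g : Fin b → ℕ,
      (∏ i, (∑ i ∈ Finset.range q, (Polynomial.X : Polynomial ℕ) ^ i).coeff (g i))
      = if (∀ i, g i < q) then 1 else 0 := by
    intro g
    simp only [hc]
    rw [Fintype.prod_boole (M₀ := ℕ) (p := fun i => g i < q)]
    congr 1
  rw [Finset.sum_congr rfl (fun g _ => h2 g)]
  rw [Finset.sum_ite, Finset.sum_const, Finset.sum_const]
  simp

/-- separated set -/
def SepSet (p n : ℕ) (S : Finset (Fin n)) : Prop :=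
  ∀ i ∈ S, ∀ j ∈ S, (i : ℕ) < (j : ℕ) → (i : ℕ) + p + 1 ≤ (j : ℕ)

/-- maximal separated set -/
def MaxSep (p n : ℕ) (S : Finset (Fin n)) : Prop :=
  SepSet p n S ∧ ∀ S', SepSet p n S' → S ⊆ S' → S' = S

lemma indicator_mem_subcube {n : ℕ} (S T : Finset (Fin n)) (hTS : T ⊆ S) :
    (fun i => decide (i ∈ T)) ∈ subcubeVerts (fun _ => false) S := by
  intro i hi
  simp only [decide_eq_false_iff_not]
  exact fun hiT => hi (hTS hiT)

lemma sepVert_indicator_iff {p n : ℕ} (S : Finset (Fin n)) :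
    sepVert p n (fun i => decide (i ∈ S)) ↔ SepSet p n S := by
  constructor
  · intro h i hi j hj hij
    exact h i j (by exact_mod_cast hij) (by simpa using hi) (by simpa using hj)
  · intro h i j hij hi hj
    exact h i (by simpa using hi) j (by simpa using hj) (by exact_mod_cast hij)

lemma cube_sep_iff {p n : ℕ} (S : Finset (Fin n)) :
    (∀ u ∈ subcubeVerts (fun _ => false) S, sepVert p n u) ↔ SepSet p n S := by
  constructor
  · intro h
    rw [← sepVert_indicator_iff]
    exact h _ (indicator_mem_subcube S S (subset_refl S))
  · intro h u hu i j hij hi hj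
    have hiS : i ∈ S := by by_contra hc; rw [hu i hc] at hi; simp at hi
    have hjS : j ∈ S := by by_contra hc; rw [hu j hc] at hj; simp at hj
    exact h i hiS j hjS (by exact_mod_cast hij)

lemma subcube_eq_imp {n : ℕ} (S T : Finset (Fin n))
    (h : subcubeVerts (fun _ => false) T = subcubeVerts (fun _ => false) S) : T ⊆ S := by
  intro j hj
  have : (fun i => decide (i ∈ ({j} : Finset (Fin n)))) ∈ subcubeVerts (fun _ => false) S := by
    rw [← h]
    exact indicator_mem_subcube T {j} (by simpa using hj)
  by_contra hjS
  have := this j hjS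
  simp at this

lemma isMaxCube_iff (p n : ℕ) (b : Fin n → Bool) (S : Finset (Fin n)) :
    IsMaxCube p n b S ↔ b = (fun _ => false) ∧ MaxSep p n S := by
  constructor
  · rintro ⟨h1, h2, h3⟩
    -- top vertex
    set u₀ : Fin n → Bool := fun i => b i || decide (i ∈ S) with hu₀
    have hu₀mem : u₀ ∈ subcubeVerts b S := by
      intro i hi
      simp [hu₀, hi]
    have hu₀sep : sepVert p n u₀ := h2 _ hu₀mem
    set T : Finset (Fin n) := Finset.univ.filter (fun i => u₀ i = true) with hT
    have hmemT : ∀ i, i ∈ T ↔ u₀ i = true := by intro i; simp [hT]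
    have hT1 : ∀ i ∈ T, (fun _ => false : Fin n → Bool) i = false := fun _ _ => rfl
    have hT2 : ∀ u ∈ subcubeVerts (fun _ => false) T, sepVert p n u := by
      intro u hu i j hij hi hj
      have hiT : i ∈ T := by by_contra hc; rw [hu i hc] at hi; simp at hi
      have hjT : j ∈ T := by by_contra hc; rw [hu j hc] at hj; simp at hj
      exact hu₀sep i j hij ((hmemT i).1 hiT) ((hmemT j).1 hjT)
    have hsub : subcubeVerts b S ⊆ subcubeVerts (fun _ => false) T := by
      intro u hu i hi
      rw [hmemT i] at hi
      have hbi : b i = false := by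
        simp only [hu₀, Bool.or_eq_true, decide_eq_true_eq] at hi
        push_neg at hi
        simpa using hi.1
      have hiS : i ∉ S := by
        intro hc
        exact hi.elim (by simp [hu₀, hc])
      rw [hu i hiS, hbi]
    have heq := h3 _ _ hT1 hT2 hsub
    -- all-false vertex in cube(b,S)
    have hfalse : (fun _ => false : Fin n → Bool) ∈ subcubeVerts b S := by
      rw [← heq]
      intro i hi; rfl
    have hb : b = (fun _ => false) := by
      funext i
      by_cases hi : i ∈ S
      · exact h1 i hi
      · exact (hfalse i hi).symm
    subst hb
    have hST : S = T := by
      apply Finset.Subset.antisymm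
      · intro i hi
        rw [hmemT]
        simp [hu₀, hi]
      · exact subcube_eq_imp S T heq
    refine ⟨rfl, ?_, ?_⟩
    · rw [← cube_sep_iff]; exact h2
    · intro S' hS' hSS'
      have h1' : ∀ i ∈ S', (fun _ => false : Fin n → Bool) i = false := fun _ _ => rfl
      have h2' := (cube_sep_iff S').2 hS'
      have hsub' : subcubeVerts (fun _ => false) S ⊆ subcubeVerts (fun _ => false) S' := by
        intro u hu i hi
        exact hu i (fun hc => hi (hSS' hc))
      have heq' := h3 _ _ h1' h2' hsub'
      exact Finset.Subset.antisymm (subcube_eq_imp S S' heq') hSS'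
  · rintro ⟨rfl, hsep, hmax⟩
    refine ⟨fun _ _ => rfl, (cube_sep_iff S).2 hsep, ?_⟩
    intro b' S' h1' h2' hsub
    -- all-false in cube(b,S) hence in cube(b',S'); so b' = false off S', and b' = false on S'
    have hfalse : (fun _ => false : Fin n → Bool) ∈ subcubeVerts b' S' :=
      hsub (fun i hi => rfl)
    have hb' : b' = (fun _ => false) := by
      funext i
      by_cases hi : i ∈ S'
      · exact h1' i hi
      · exact (hfalse i hi).symm
    subst hb'
    -- S ⊆ S'
    have hSS' : S ⊆ S' := by
      intro j hj
      have : (fun i => decide (i ∈ ({j} : Finset (Fin n)))) ∈ subcubeVerts (fun _ => false) S' :=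
        hsub (indicator_mem_subcube S {j} (by simpa using hj))
      by_contra hjS'
      have := this j hjS'
      simp at this
    have : S' = S := hmax S' ((cube_sep_iff S').1 h2') hSS'
    rw [this]

open Classical in
lemma hCount_eq (p n k : ℕ) :
    hCount p n k = (Finset.univ.filter
      (fun S : Finset (Fin n) => S.card = k ∧ MaxSep p n S)).card := by
  rw [hCount, Set.ncard_eq_toFinset_card']
  refine Finset.card_bij' (fun x _ => x.2) (fun S _ => ((fun _ => false), S)) ?_ ?_ ?_ ?_
  · rintro ⟨b, S⟩ hx
    rw [Set.mem_toFinset] at hx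
    have h2 := (isMaxCube_iff p n b S).1 hx.2
    simp only [Finset.mem_filter, Finset.mem_univ, true_and]
    exact ⟨hx.1, h2.2⟩
  · intro S hS
    rw [Finset.mem_filter] at hS
    rw [Set.mem_toFinset]
    exact ⟨hS.2.1, (isMaxCube_iff p n _ _).2 ⟨rfl, hS.2.2⟩⟩
  · rintro ⟨b, S⟩ hx
    rw [Set.mem_toFinset] at hx
    have hb := ((isMaxCube_iff p n b S).1 hx.2).1
    simp [hb]
  · intro S hS
    rfl

def posf (p : ℕ) (G : ℕ → ℕ) (i : ℕ) : ℕ := (∑ j ∈ Finset.range (i+1), G j) + i*(p+1)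

def Phi (p n k : ℕ) (G : ℕ → ℕ) : Finset (Fin n) :=
  Finset.univ.filter (fun t : Fin n => ∃ i ∈ Finset.range k, posf p G i = (t : ℕ))

lemma posf_zero (p : ℕ) (G : ℕ → ℕ) : posf p G 0 = G 0 := by simp [posf]

lemma posf_succ (p : ℕ) (G : ℕ → ℕ) (i : ℕ) :
    posf p G (i+1) = posf p G i + G (i+1) + (p+1) := by
  simp only [posf, Finset.sum_range_succ]
  ring

lemma posf_add_le (p : ℕ) (G : ℕ → ℕ) {i j : ℕ} (h : i < j) :
    posf p G i + (p+1) ≤ posf p G j := by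
  have h1 : ∑ t ∈ Finset.range (i+1), G t ≤ ∑ t ∈ Finset.range (j+1), G t :=
    Finset.sum_le_sum_of_subset (Finset.range_subset_range.2 (by omega))
  have h2 : (i+1)*(p+1) ≤ j*(p+1) := Nat.mul_le_mul_right _ (by omega)
  have h3 : (i+1)*(p+1) = i*(p+1) + (p+1) := by ring
  simp only [posf]
  omega

lemma posf_mono (p : ℕ) (G : ℕ → ℕ) {i j : ℕ} (h : i ≤ j) :
    posf p G i ≤ posf p G j := by
  rcases eq_or_lt_of_le h with rfl | h
  · exact le_refl _
  · have := posf_add_le p G h; omega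

section Main
variable {p n k m : ℕ} {G : ℕ → ℕ}
variable (hk : 1 ≤ k) (hm : m + (p+1)*k = n + p)
variable (hsum : ∑ j ∈ Finset.range (k+1), G j = m) (hle : ∀ j, G j ≤ p)

include hk hm hsum in
lemma posf_end : posf p G (k-1) + G k + 1 = n := by
  obtain ⟨t, rfl⟩ : ∃ t, k = t + 1 := ⟨k-1, by omega⟩
  have h1 : ∑ j ∈ Finset.range (t+1+1), G j = ∑ j ∈ Finset.range (t+1), G j + G (t+1) :=
    Finset.sum_range_succ _ _
  have h2 : (p+1)*(t+1) = t*(p+1) + (p+1) := by ring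
  simp only [posf, Nat.add_sub_cancel]
  omega

include hk hm hsum in
lemma posf_lt_n : ∀ i < k, posf p G i < n := by
  intro i hi
  have h1 := posf_end hk hm hsum
  have h2 : posf p G i ≤ posf p G (k-1) := posf_mono p G (by omega)
  omega

include hk hm hsum in
lemma card_Phi : (Phi p n k G).card = k := by
  have h : (Finset.range k).card = (Phi p n k G).card := by
    refine Finset.card_bij (fun a ha => ⟨posf p G a,
      posf_lt_n hk hm hsum a (Finset.mem_range.1 ha)⟩) ?_ ?_ ?_
    · intro a ha
      simp only [Phi, Finset.mem_filter, Finset.mem_univ, true_and]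
      exact ⟨a, ha, rfl⟩
    · intro a ha b hb hab
      have : posf p G a = posf p G b := congrArg Fin.val hab
      by_contra hne
      rcases Nat.lt_or_ge a b with h | h
      · have := posf_add_le p G h; omega
      · have hba : b < a := by omega
        have := posf_add_le p G hba; omega
    · intro t ht
      simp only [Phi, Finset.mem_filter, Finset.mem_univ, true_and] at ht
      obtain ⟨i, hi, hpi⟩ := ht
      exact ⟨i, hi, by ext; simpa using hpi⟩
  rw [← h, Finset.card_range]

lemma sep_Phi : SepSet p n (Phi p n k G) := by
  intro a ha b hb hab
  simp only [Phi, Finset.mem_filter, Finset.mem_univ, true_and] at ha hb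
  obtain ⟨i, hi, hpi⟩ := ha
  obtain ⟨j, hj, hpj⟩ := hb
  have hij : i < j := by
    by_contra h
    have := posf_mono p G (show j ≤ i by omega)
    omega
  have := posf_add_le p G hij
  omega

include hk hm hsum hle in
lemma max_Phi : MaxSep p n (Phi p n k G) := by
  refine ⟨sep_Phi, ?_⟩
  intro S' hS' hsub
  refine Finset.Subset.antisymm ?_ hsub
  intro t htS'
  by_contra ht
  have htn : ∀ i ∈ Finset.range k, posf p G i ≠ (t : ℕ) := by
    intro i hi hcontra
    refine ht ?_
    simp only [Phi, Finset.mem_filter, Finset.mem_univ, true_and]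
    exact ⟨i, hi, hcontra⟩
  have hpe : ∀ i (hi : i < k), (⟨posf p G i, posf_lt_n hk hm hsum i hi⟩ : Fin n) ∈ S' := by
    intro i hi
    apply hsub
    simp only [Phi, Finset.mem_filter, Finset.mem_univ, true_and]
    exact ⟨i, Finset.mem_range.2 hi, rfl⟩
  set A := (Finset.range k).filter (fun i => posf p G i < (t : ℕ)) with hA
  have hend := posf_end hk hm hsum
  by_cases hAne : A.Nonempty
  · set i := A.max' hAne with hi
    have hiA : i ∈ A := A.max'_mem hAne
    rw [hA, Finset.mem_filter, Finset.mem_range] at hiA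
    obtain ⟨hik, hit⟩ := hiA
    have sep1 : posf p G i + p + 1 ≤ (t : ℕ) :=
      hS' _ (hpe i hik) t htS' hit
    by_cases hlast : i = k - 1
    · rw [hlast] at sep1
      have : (t : ℕ) < n := t.isLt
      have := hle k
      omega
    · have hik1 : i + 1 < k := by omega
      have hnot : ¬ posf p G (i+1) < (t : ℕ) := by
        intro hcon
        have : i + 1 ∈ A := by
          rw [hA, Finset.mem_filter, Finset.mem_range]; exact ⟨hik1, hcon⟩
        have := A.le_max' _ this
        omega
      have hne : posf p G (i+1) ≠ (t : ℕ) := htn _ (Finset.mem_range.2 hik1)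
      have sep2 : (t : ℕ) + p + 1 ≤ posf p G (i+1) := by
        refine hS' t htS' _ (hpe (i+1) hik1) ?_
        simp only []
        omega
      have := posf_succ p G i
      have := hle (i+1)
      omega
  · have h0 : 0 ∈ Finset.range k := Finset.mem_range.2 (by omega)
    have hnot : ¬ posf p G 0 < (t : ℕ) := by
      intro hcon
      exact hAne ⟨0, by rw [hA, Finset.mem_filter]; exact ⟨h0, hcon⟩⟩
    have hne : posf p G 0 ≠ (t : ℕ) := htn _ h0
    have sep : (t : ℕ) + p + 1 ≤ posf p G 0 := by
      refine hS' t htS' _ (hpe 0 (by omega)) ?_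
      simp only []
      omega
    have := posf_zero p G
    have := hle 0
    omega

end Main

section Inj
variable {p n k m : ℕ} {G G' : ℕ → ℕ}
variable (hk : 1 ≤ k) (hm : m + (p+1)*k = n + p)
variable (hsum : ∑ j ∈ Finset.range (k+1), G j = m)
variable (hsum' : ∑ j ∈ Finset.range (k+1), G' j = m)

include hk hm hsum hsum' in
lemma posf_of_Phi_eq (h : Phi p n k G = Phi p n k G') :
    ∀ i < k, posf p G i = posf p G' i := by
  have hmono : StrictMono (fun x : Fin k => posf p G x) := by
    intro a b hab
    have := posf_add_le p G (i := (a:ℕ)) (j := (b:ℕ)) hab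
    show posf p G a < posf p G b
    omega
  have hmono' : StrictMono (fun x : Fin k => posf p G' x) := by
    intro a b hab
    have := posf_add_le p G' (i := (a:ℕ)) (j := (b:ℕ)) hab
    show posf p G' a < posf p G' b
    omega
  have hrange : Set.range (fun x : Fin k => posf p G x)
      = Set.range (fun x : Fin k => posf p G' x) := by
    ext x
    simp only [Set.mem_range]
    constructor
    · rintro ⟨i, rfl⟩
      have hx : posf p G i < n := posf_lt_n hk hm hsum i i.isLt
      have hmem : (⟨posf p G i, hx⟩ : Fin n) ∈ Phi p n k G := by
        simp only [Phi, Finset.mem_filter, Finset.mem_univ, true_and]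
        exact ⟨i, Finset.mem_range.2 i.isLt, rfl⟩
      rw [h] at hmem
      simp only [Phi, Finset.mem_filter, Finset.mem_univ, true_and] at hmem
      obtain ⟨j, hj, hpj⟩ := hmem
      exact ⟨⟨j, Finset.mem_range.1 hj⟩, hpj⟩
    · rintro ⟨i, rfl⟩
      have hx : posf p G' i < n := posf_lt_n hk hm hsum' i i.isLt
      have hmem : (⟨posf p G' i, hx⟩ : Fin n) ∈ Phi p n k G' := by
        simp only [Phi, Finset.mem_filter, Finset.mem_univ, true_and]
        exact ⟨i, Finset.mem_range.2 i.isLt, rfl⟩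
      rw [← h] at hmem
      simp only [Phi, Finset.mem_filter, Finset.mem_univ, true_and] at hmem
      obtain ⟨j, hj, hpj⟩ := hmem
      exact ⟨⟨j, Finset.mem_range.1 hj⟩, hpj⟩
  haveI : WellFoundedLT (Fin k) := inferInstance
  have := (StrictMono.range_inj hmono hmono').1 hrange
  intro i hi
  exact congrFun this ⟨i, hi⟩

include hk hm hsum hsum' in
lemma G_of_Phi_eq (h : Phi p n k G = Phi p n k G') :
    ∀ j < k + 1, G j = G' j := by
  have hpos := posf_of_Phi_eq hk hm hsum hsum' h
  intro j hj
  rcases Nat.eq_zero_or_pos j with rfl | hj0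
  · have := hpos 0 (by omega)
    rw [posf_zero, posf_zero] at this
    exact this
  · rcases Nat.lt_or_ge j k with hjk | hjk
    · obtain ⟨i, rfl⟩ : ∃ i, j = i + 1 := ⟨j - 1, by omega⟩
      have h1 := hpos i (by omega)
      have h2 := hpos (i+1) hjk
      have h3 := posf_succ p G i
      have h4 := posf_succ p G' i
      omega
    · have hjk' : j = k := by omega
      have h1 := hpos (k-1) (by omega)
      have h2 := posf_end hk hm hsum
      have h3 := posf_end hk hm hsum'
      rw [hjk']
      omega
end Inj

section Surj
variable {p n k m : ℕ} {S : Finset (Fin n)}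

/-- sorted enumeration of `S`, extended by `0`. -/
noncomputable def sfun (S : Finset (Fin n)) (k : ℕ) (hS : S.card = k) : ℕ → ℕ :=
  fun i => if h : i < k then ((S.orderIsoOfFin hS ⟨i, h⟩ : Fin n) : ℕ) else 0

variable (hS : S.card = k)

lemma sfun_mem {i : ℕ} (hi : i < k) :
    ∃ t ∈ S, (t : ℕ) = sfun S k hS i := by
  refine ⟨(S.orderIsoOfFin hS ⟨i, hi⟩ : Fin n), (S.orderIsoOfFin hS ⟨i, hi⟩).2, ?_⟩
  simp [sfun, hi]

lemma sfun_lt_n {i : ℕ} (hi : i < k) : sfun S k hS i < n := by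
  simp only [sfun, dif_pos hi]
  exact (S.orderIsoOfFin hS ⟨i, hi⟩ : Fin n).isLt

lemma sfun_mono {i j : ℕ} (hij : i < j) (hj : j < k) :
    sfun S k hS i < sfun S k hS j := by
  have hi : i < k := by omega
  simp only [sfun, dif_pos hi, dif_pos hj]
  have := (S.orderIsoOfFin hS).strictMono (show (⟨i, hi⟩ : Fin k) < ⟨j, hj⟩ from hij)
  exact this

lemma sfun_mono_le {i j : ℕ} (hij : i ≤ j) (hj : j < k) :
    sfun S k hS i ≤ sfun S k hS j := by
  rcases eq_or_lt_of_le hij with rfl | h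
  · exact le_refl _
  · exact le_of_lt (sfun_mono hS h hj)

lemma sfun_surj {t : Fin n} (ht : t ∈ S) :
    ∃ i, ∃ h : i < k, sfun S k hS i = (t : ℕ) := by
  set l := (S.orderIsoOfFin hS).symm ⟨t, ht⟩ with hl
  refine ⟨l, l.isLt, ?_⟩
  simp only [sfun, dif_pos l.isLt]
  have : S.orderIsoOfFin hS ⟨(l : ℕ), l.isLt⟩ = ⟨t, ht⟩ := by
    rw [hl]
    simp
  rw [this]

lemma sfun_between {t : Fin n} (ht : t ∈ S) {i : ℕ} (hi : i < k)
    (h : sfun S k hS i < (t : ℕ)) : i + 1 < k ∧ sfun S k hS (i+1) ≤ (t : ℕ) := by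
  obtain ⟨l, hl, hls⟩ := sfun_surj hS ht
  have hil : i < l := by
    by_contra hc
    have := sfun_mono_le hS (show l ≤ i by omega) hi
    omega
  have h1 : i + 1 < k := by omega
  refine ⟨h1, ?_⟩
  rw [← hls]
  exact sfun_mono_le hS (by omega) hl

lemma sfun_ge_zero {t : Fin n} (ht : t ∈ S) (hk : 1 ≤ k) : sfun S k hS 0 ≤ (t : ℕ) := by
  obtain ⟨l, hl, hls⟩ := sfun_surj hS ht
  rw [← hls]
  exact sfun_mono_le hS (by omega) hl

lemma sfun_le_last {t : Fin n} (ht : t ∈ S) (hk : 1 ≤ k) : (t : ℕ) ≤ sfun S k hS (k-1) := by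
  obtain ⟨l, hl, hls⟩ := sfun_surj hS ht
  rw [← hls]
  exact sfun_mono_le hS (by omega) (by omega)

lemma sfun_sep (hsep : SepSet p n S) {i j : ℕ} (hij : i < j) (hj : j < k) :
    sfun S k hS i + p + 1 ≤ sfun S k hS j := by
  obtain ⟨a, ha, has⟩ := sfun_mem hS (show i < k by omega)
  obtain ⟨b, hb, hbs⟩ := sfun_mem hS hj
  have := hsep a ha b hb (by rw [has, hbs]; exact sfun_mono hS hij hj)
  omega

lemma insert_contra (hmax : MaxSep p n S) (j : ℕ) (hj : j < n)
    (h1 : ∀ t ∈ S, (t : ℕ) ≠ j)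
    (h2 : ∀ t ∈ S, ((t : ℕ) < j → (t : ℕ) + p + 1 ≤ j) ∧ (j < (t : ℕ) → j + p + 1 ≤ (t : ℕ))) :
    False := by
  set jf : Fin n := ⟨j, hj⟩ with hjf
  have hsep' : SepSet p n (insert jf S) := by
    intro a ha b hb hab
    rw [Finset.mem_insert] at ha hb
    rcases ha with rfl | ha <;> rcases hb with rfl | hb
    · omega
    · have := (h2 b hb).2 (by simpa [hjf] using hab)
      simpa using this
    · have := (h2 a ha).1 (by simpa [hjf] using hab)
      simpa using this
    · exact hmax.1 a ha b hb hab
  have heq := hmax.2 _ hsep' (Finset.subset_insert jf S)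
  have : jf ∈ S := by rw [← heq]; exact Finset.mem_insert_self jf S
  exact h1 jf this rfl

variable (hk : 1 ≤ k) (hkn : k ≤ n)

include hk in
lemma sfun_zero_le (hmax : MaxSep p n S) : sfun S k hS 0 ≤ p := by
  by_contra hc
  push_neg at hc
  set j := sfun S k hS 0 - (p+1) with hjdef
  have hjn : j < n := by
    have := sfun_lt_n hS (show 0 < k by omega)
    omega
  refine insert_contra hmax j hjn ?_ ?_
  · intro t ht hteq
    have := sfun_ge_zero hS ht hk
    omega
  · intro t ht
    have := sfun_ge_zero hS ht hk
    constructor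
    · intro h; omega
    · intro h; omega

include hk in
lemma sfun_last_ge (hmax : MaxSep p n S) : n ≤ sfun S k hS (k-1) + p + 1 := by
  by_contra hc
  push_neg at hc
  set j := sfun S k hS (k-1) + p + 1 with hjdef
  refine insert_contra hmax j (by omega) ?_ ?_
  · intro t ht hteq
    have := sfun_le_last hS ht hk
    omega
  · intro t ht
    have := sfun_le_last hS ht hk
    constructor
    · intro h; omega
    · intro h; omega

lemma sfun_gap (hmax : MaxSep p n S) {i : ℕ} (hi : i + 1 < k) :
    sfun S k hS (i+1) ≤ sfun S k hS i + 2*p + 1 := by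
  by_contra hc
  push_neg at hc
  set j := sfun S k hS i + p + 1 with hjdef
  have hjn : j < n := by
    have := sfun_lt_n hS hi
    omega
  refine insert_contra hmax j hjn ?_ ?_
  · intro t ht hteq
    have h : sfun S k hS i < (t : ℕ) := by omega
    have := sfun_between hS ht (show i < k by omega) h
    omega
  · intro t ht
    constructor
    · intro h
      have hle : (t : ℕ) ≤ sfun S k hS i := by
        by_contra hc2
        push_neg at hc2
        have := sfun_between hS ht (show i < k by omega) hc2
        omega
      omega
    · intro h
      have := sfun_between hS ht (show i < k by omega) (by omega)
      omega

include hS hk in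
lemma exists_G (hm : m + (p+1)*k = n + p) (hmax : MaxSep p n S) :
    ∃ G : ℕ → ℕ, (∀ j, G j ≤ p) ∧ (∀ j, k + 1 ≤ j → G j = 0) ∧
      (∑ j ∈ Finset.range (k+1), G j = m) ∧ Phi p n k G = S := by
  classical
  set G : ℕ → ℕ := fun j =>
    if j = 0 then sfun S k hS 0 else if j < k then sfun S k hS j - sfun S k hS (j-1) - (p+1)
    else if j = k then n - sfun S k hS (k-1) - 1 else 0 with hG
  have hsepS : SepSet p n S := hmax.1
  -- posf G i = sfun S k hS i for i < k
  have hposf : ∀ i, i < k → posf p G i = sfun S k hS i := by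
    intro i
    induction i with
    | zero =>
      intro _
      rw [posf_zero]
      simp [hG]
    | succ i ih =>
      intro hik
      have hi : i < k := by omega
      rw [posf_succ, ih hi]
      have hsep := sfun_sep hS hsepS (show i < i+1 by omega) hik
      have hGi : G (i+1) = sfun S k hS (i+1) - sfun S k hS i - (p+1) := by
        simp only [hG, if_neg (show ¬ i+1 = 0 by omega), if_pos hik, Nat.add_sub_cancel]
      rw [hGi]
      omega
  have hGle : ∀ j, G j ≤ p := by
    intro j
    by_cases hj0 : j = 0
    · subst hj0
      simpa [hG] using sfun_zero_le hS hk hmax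
    · by_cases hjk : j < k
      · obtain ⟨i, rfl⟩ : ∃ i, j = i + 1 := ⟨j - 1, by omega⟩
        have := sfun_gap hS hmax (show i + 1 < k from hjk)
        simp only [hG, if_neg hj0, if_pos hjk, Nat.add_sub_cancel]
        omega
      · by_cases hjk' : j = k
        · have hGj : G j = n - sfun S k hS (k-1) - 1 := by
            rw [hjk']
            simp [hG, show ¬ k = 0 by omega, show ¬ k < k by omega]
          have h1 := sfun_last_ge hS hk hmax
          have h2 := sfun_lt_n hS (show k - 1 < k by omega)
          rw [hGj]
          omega
        · simp only [hG, if_neg hj0, if_neg hjk, if_neg hjk']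
          omega
  have hG0 : ∀ j, k + 1 ≤ j → G j = 0 := by
    intro j hj
    simp [hG, show j ≠ 0 by omega, show ¬ j < k by omega, show j ≠ k by omega]
  have hsum : ∑ j ∈ Finset.range (k+1), G j = m := by
    have h1 := hposf (k-1) (by omega)
    have h2 : ∑ j ∈ Finset.range (k+1), G j = ∑ j ∈ Finset.range k, G j + G k :=
      Finset.sum_range_succ _ _
    have h3 : posf p G (k-1) + (p+1) = (∑ j ∈ Finset.range k, G j) + (p+1)*k := by
      obtain ⟨t, rfl⟩ : ∃ t, k = t + 1 := ⟨k-1, by omega⟩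
      simp only [Nat.add_sub_cancel, posf]
      ring
    have h4 : G k = n - sfun S k hS (k-1) - 1 := by
      simp [hG, show k ≠ 0 by omega, show ¬ k < k by omega]
    have h5 : sfun S k hS (k-1) < n := sfun_lt_n hS (by omega)
    have h6 : n ≤ sfun S k hS (k-1) + p + 1 := sfun_last_ge hS hk hmax
    omega
  refine ⟨G, hGle, hG0, hsum, ?_⟩
  ext t
  simp only [Phi, Finset.mem_filter, Finset.mem_univ, true_and]
  constructor
  · rintro ⟨i, hi, hpi⟩
    rw [Finset.mem_range] at hi
    rw [hposf i hi] at hpi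
    obtain ⟨a, ha, has⟩ := sfun_mem hS hi
    have : a = t := by ext; omega
    rwa [← this]
  · intro ht
    obtain ⟨i, hik, his⟩ := sfun_surj hS ht
    exact ⟨i, Finset.mem_range.2 hik, by rw [hposf i hik]; exact his⟩

end Surj

lemma sep_card_bound {p n k : ℕ} {S : Finset (Fin n)} (hS : S.card = k) (hk : 1 ≤ k)
    (hsep : SepSet p n S) : (p+1)*k ≤ n + p := by
  have hbound : ∀ i, i < k → i*(p+1) ≤ sfun S k hS i := by
    intro i
    induction i with
    | zero => intro _; omega
    | succ i ih =>
      intro hik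
      have h1 := ih (by omega)
      have h2 := sfun_sep hS hsep (show i < i + 1 by omega) hik
      have h3 : (i+1)*(p+1) = i*(p+1) + (p+1) := by ring
      omega
  have h1 := hbound (k-1) (by omega)
  have h2 := sfun_lt_n hS (show k - 1 < k by omega)
  have h3 : (k-1)*(p+1) + (p+1) = (p+1)*k := by
    obtain ⟨t, rfl⟩ : ∃ t, k = t + 1 := ⟨k-1, by omega⟩
    simp only [Nat.add_sub_cancel]
    ring
  omega


section Glue
open Finset

def extg (k : ℕ) (g : Fin (k+1) → ℕ) : ℕ → ℕ :=
  fun j => if h : j < k+1 then g ⟨j, h⟩ else 0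

lemma extg_sum (k : ℕ) (g : Fin (k+1) → ℕ) :
    ∑ j ∈ Finset.range (k+1), extg k g j = ∑ i : Fin (k+1), g i := by
  rw [← Fin.sum_univ_eq_sum_range]
  apply Finset.sum_congr rfl
  intro i _
  simp [extg, i.isLt]

open Classical in
lemma card_maxSep {p n k m : ℕ} (hk : 1 ≤ k) (hm : m + (p+1)*k = n + p) :
    (Finset.univ.filter
      (fun S : Finset (Fin n) => S.card = k ∧ MaxSep p n S)).card
    = ((Finset.finAntidiagonal (k+1) m).filter
        (fun g : Fin (k+1) → ℕ => ∀ i, g i < p+1)).card := by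
  symm
  refine Finset.card_bij (fun g _ => Phi p n k (extg k g)) ?_ ?_ ?_
  · intro g hg
    rw [Finset.mem_filter, Finset.mem_finAntidiagonal] at hg
    have hsum : ∑ j ∈ Finset.range (k+1), extg k g j = m := by
      rw [extg_sum]; exact hg.1
    have hle : ∀ j, extg k g j ≤ p := by
      intro j
      by_cases h : j < k + 1
      · simp only [extg, dif_pos h]
        have := hg.2 ⟨j, h⟩
        omega
      · simp [extg, h]
    rw [Finset.mem_filter]
    exact ⟨Finset.mem_univ _, card_Phi hk hm hsum, max_Phi hk hm hsum hle⟩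
  · intro g hg g' hg' heq
    rw [Finset.mem_filter, Finset.mem_finAntidiagonal] at hg hg'
    have hsum : ∑ j ∈ Finset.range (k+1), extg k g j = m := by
      rw [extg_sum]; exact hg.1
    have hsum' : ∑ j ∈ Finset.range (k+1), extg k g' j = m := by
      rw [extg_sum]; exact hg'.1
    have := G_of_Phi_eq hk hm hsum hsum' heq
    funext i
    have h1 := this i i.isLt
    simpa [extg, i.isLt] using h1
  · intro S hS
    rw [Finset.mem_filter] at hS
    obtain ⟨_, hcard, hmax⟩ := hS
    obtain ⟨G, hGle, hG0, hGsum, hGPhi⟩ := exists_G hcard hk hm hmax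
    refine ⟨fun i => G i, ?_, ?_⟩
    · rw [Finset.mem_filter, Finset.mem_finAntidiagonal]
      constructor
      · rw [Fin.sum_univ_eq_sum_range]
        exact hGsum
      · intro i
        show G (i : ℕ) < p + 1
        have := hGle i
        omega
    · show Phi p n k (extg k (fun i => G (i : ℕ))) = S
      have hext : extg k (fun i => G (i : ℕ)) = G := by
        funext j
        by_cases h : j < k + 1
        · simp [extg, h]
        · simp only [extg, dif_neg h]
          exact (hG0 j (by omega)).symm
      rw [hext, hGPhi]

end Glue

/-- For `p ≥ 1` and `1 ≤ k ≤ n`, the number of maximal induced hypercubes of dimension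
`k` in the Fibonacci `p`-cube `Γ^p_n` equals the `(p+1)`-nomial coefficient
`[k+1 choose n-(p+1)k+p]_p`. -/
theorem stmt17 (p n k : ℕ) (hp : 1 ≤ p) (hk : 1 ≤ k) (hkn : k ≤ n) :
    hCount p n k = pnomZ (p + 1) ((k : ℤ) + 1) ((n : ℤ) - (p + 1) * k + p) := by
  classical
  rcases le_or_gt ((p+1)*k) (n+p) with hcase | hcase
  · set m := n + p - (p+1)*k with hmdef
    have hm : m + (p+1)*k = n + p := by omega
    rw [hCount_eq, card_maxSep hk hm, ← pnomial_eq_card]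
    have hc : (((p+1)*k : ℕ) : ℤ) = ((p:ℤ)+1)*k := by push_cast; ring
    have h1 : ((n : ℤ) - (p+1)*k + p) = (m : ℤ) := by omega
    have h2 : ((k : ℤ) + 1) = ((k+1 : ℕ) : ℤ) := by push_cast; ring
    rw [pnomZ, h1, h2, if_pos (by positivity), if_pos (by positivity)]
    simp
  · have hzero : (Finset.univ.filter
        (fun S : Finset (Fin n) => S.card = k ∧ MaxSep p n S)).card = 0 := by
      rw [Finset.card_eq_zero, Finset.filter_eq_empty_iff]
      rintro S - ⟨hcard, hmax⟩
      have := sep_card_bound hcard hk hmax.1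
      omega
    rw [hCount_eq, hzero, pnomZ, if_pos (by positivity), if_neg (by
      simp only [not_le]
      have hc : (((p+1)*k : ℕ) : ℤ) = ((p:ℤ)+1)*k := by push_cast; ring
      omega)]
end
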